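/- arXiv:1008.3581 — 8 statements merged into one kernel-verified Lean document; each statement's English description precedes it below -/
import Mathlib

section
/- There is an absolute constant C > 0 such that for every ε ∈ (0,1] and all r, t > 0 with r > 1 and r > t/100, the kernel satisfies |G_ε(r,t)| ≤ C · r^{-1/2} / (ε·r + r^{1/2} + max(t − r, 0)). -/
/-!
Write the integrand as `exp (phase s) * s^{-3/2}`. The derivative `phase' s = i (z - r² / (4 s²))`
has modulus at least `ε` and is small only near the stationary point `s = r`. Put
`D = ε r + √r + (t - r)₊` and `L = r / (2 D)`. On the window `|s - r| ≤ L` the trivial bound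
`2 L (r / 2)^{-3/2} ≲ r^{-1/2} / D` suffices. Elsewhere one integration by parts against
`exp ∘ phase` (of modulus `≤ 1` for `s ≥ t`) leaves the boundary values of `s^{-3/2} / phase'` and
the integral of its derivative. On `[t, r/2]` and `[2r, ∞)`, where `|phase'| ≳ r² / s²` and
`|phase'| ≳ 1`, this is `O(r^{-3/2})`, which is `O(r^{-1/2} / D)` as `t < 100 r`. On the rest of
`[r/2, 2r]`, at distance `≥ ℓ` from `r` with `ℓ ≥ max (L, t - r)`, one has
`|phase'| ≥ max (ε, ℓ / (8 r))`, the `|phase'|⁻²` term integrates to an arctangent, and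
`D ≤ 64 r max (ε, ℓ / (8 r))`.
-/

open MeasureTheory

/-- The Green's function kernel `G_ε(r,t)` of `(−Δ − z)^{-1} e^{itΔ}` on `ℝ³`,
with `z = 1/4 + iε`:
`G_ε(r,t) = (e^{-iπ/4}/(8π^{3/2})) ∫_t^∞ exp(i((s−t)z + r²/(4s))) s^{-3/2} ds`. -/
noncomputable def Gker (ε r t : ℝ) : ℂ :=
  (Complex.exp (-(Real.pi / 4 : ℝ) * Complex.I) / ((8 * Real.pi ^ ((3 : ℝ) / 2) : ℝ))) *
    ∫ s in Set.Ioi t,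
      Complex.exp (Complex.I * (((s : ℂ) - (t : ℂ)) * (1 / 4 + (ε : ℂ) * Complex.I)
          + (r : ℂ) ^ 2 / (4 * (s : ℂ)))) * ((s ^ (-(3 : ℝ) / 2) : ℝ) : ℂ)

open Set Filter Complex

theorem norm_exp_mul_le {z : ℂ} (hz : z.re ≤ 0) (v : ℂ) : ‖exp z * v‖ ≤ ‖v‖ := by
  rw [norm_mul, norm_exp]
  exact mul_le_of_le_one_left (norm_nonneg v) (Real.exp_le_one_iff.mpr hz)

theorem norm_integral_exp_mul_le {φ φ' w w' : ℝ → ℂ} {a b : ℝ} (hab : a ≤ b)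
    (hφ : ∀ x ∈ Icc a b, HasDerivAt φ (φ' x) x) (hw : ∀ x ∈ Icc a b, HasDerivAt w (w' x) x)
    (hφ' : ContinuousOn φ' (Icc a b)) (hw' : ContinuousOn w' (Icc a b))
    (hre : ∀ x ∈ Icc a b, (φ x).re ≤ 0) :
    ‖∫ x in a..b, exp (φ x) * (φ' x * w x)‖ ≤ ‖w a‖ + ‖w b‖ + ∫ x in a..b, ‖w' x‖ := by
  rw [← uIcc_of_le hab] at hφ hw hφ' hw'
  have hexp : ContinuousOn (fun x => exp (φ x)) (uIcc a b) :=
    fun x hx => (hφ x hx).continuousAt.continuousWithinAt.cexp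
  have hwc : ContinuousOn w (uIcc a b) := fun x hx => (hw x hx).continuousAt.continuousWithinAt
  have hF : IntervalIntegrable (fun x => exp (φ x) * (φ' x * w x)) volume a b :=
    (hexp.mul (hφ'.mul hwc)).intervalIntegrable
  have hE : IntervalIntegrable (fun x => exp (φ x) * w' x) volume a b :=
    (hexp.mul hw').intervalIntegrable
  have hibp : ∫ x in a..b, exp (φ x) * (φ' x * w x)
      = exp (φ b) * w b - exp (φ a) * w a - ∫ x in a..b, exp (φ x) * w' x := by
    rw [eq_sub_iff_add_eq, ← intervalIntegral.integral_add hF hE]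
    refine intervalIntegral.integral_eq_sub_of_hasDerivAt (f := fun x => exp (φ x) * w x)
      (fun x hx => ?_) (hF.add hE)
    exact ((hφ x hx).cexp.mul (hw x hx)).congr_deriv (by ring)
  have hrem : ∫ x in a..b, ‖exp (φ x) * w' x‖ ≤ ∫ x in a..b, ‖w' x‖ :=
    intervalIntegral.integral_mono_on hab hE.norm (hw'.norm.intervalIntegrable)
      fun x hx => norm_exp_mul_le (hre x hx) _
  rw [hibp]
  calc _ ≤ ‖exp (φ b) * w b‖ + ‖exp (φ a) * w a‖ + ‖∫ x in a..b, exp (φ x) * w' x‖ :=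
        (norm_sub_le _ _).trans (add_le_add_left (norm_sub_le _ _) _)
    _ ≤ ‖w b‖ + ‖w a‖ + ∫ x in a..b, ‖w' x‖ := by
        gcongr
        · exact norm_exp_mul_le (hre b ⟨hab, le_rfl⟩) _
        · exact norm_exp_mul_le (hre a ⟨le_rfl, hab⟩) _
        · exact (intervalIntegral.norm_integral_le_integral_norm hab).trans hrem
    _ = _ := by ring

theorem norm_integral_max_le {E : Type*} [NormedAddCommGroup E] [NormedSpace ℝ E] {f : ℝ → E}
    {a t q B : ℝ} (hta : t ≤ a) (haq : a ≤ max t q) (hB : 0 ≤ B)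
    (h : t < q → ‖∫ x in a..q, f x‖ ≤ B) : ‖∫ x in a..max t q, f x‖ ≤ B := by
  rcases le_or_gt q t with hqt | htq
  · rw [max_eq_left hqt] at haq ⊢
    rwa [le_antisymm haq hta, intervalIntegral.integral_same, norm_zero]
  · rw [max_eq_right htq.le]
    exact h htq

theorem norm_integral_le_add_add {E : Type*} [NormedAddCommGroup E] [NormedSpace ℝ E]
    {f : ℝ → E} {a b c d : ℝ} (hab : IntervalIntegrable f volume a b)
    (hbc : IntervalIntegrable f volume b c) (hcd : IntervalIntegrable f volume c d) :
    ‖∫ x in a..d, f x‖ ≤ ‖∫ x in a..b, f x‖ + ‖∫ x in b..c, f x‖ + ‖∫ x in c..d, f x‖ := by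
  rw [← intervalIntegral.integral_add_adjacent_intervals (hab.trans hbc) hcd,
    ← intervalIntegral.integral_add_adjacent_intervals hab hbc]
  exact norm_add₃_le

theorem integral_inv_sq_add_sq_div_le {c k : ℝ} (hc : 0 < c) (hk : 0 < k) (x₀ a b : ℝ) :
    ∫ x in a..b, (c ^ 2 + ((x - x₀) / k) ^ 2)⁻¹ ≤ Real.pi * k / c := by
  have hderiv : ∀ x ∈ uIcc a b, HasDerivAt (fun x => k / c * Real.arctan ((x - x₀) / (k * c)))
      (c ^ 2 + ((x - x₀) / k) ^ 2)⁻¹ x := by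
    intro x _
    refine ((((hasDerivAt_id' x).sub_const x₀).div_const (k * c)).arctan.const_mul
      (k / c)).congr_deriv ?_
    field_simp
  have hcont : Continuous fun x => (c ^ 2 + ((x - x₀) / k) ^ 2)⁻¹ :=
    (by fun_prop : Continuous fun x => c ^ 2 + ((x - x₀) / k) ^ 2).inv₀ fun x => by positivity
  rw [intervalIntegral.integral_eq_sub_of_hasDerivAt hderiv (hcont.intervalIntegrable a b)]
  have h₁ := Real.arctan_lt_pi_div_two ((b - x₀) / (k * c))
  have h₂ := Real.neg_pi_div_two_lt_arctan ((a - x₀) / (k * c))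
  have hkc : 0 < k / c := div_pos hk hc
  calc _ = k / c * (Real.arctan ((b - x₀) / (k * c)) - Real.arctan ((a - x₀) / (k * c))) := by ring
    _ ≤ k / c * Real.pi := mul_le_mul_of_nonneg_left (by linarith) hkc.le
    _ = Real.pi * k / c := by ring

theorem rpow_neg_three_halves {s : ℝ} (hs : 0 ≤ s) : s ^ (-(3 : ℝ) / 2) = (s * √s)⁻¹ := by
  rw [Real.sqrt_eq_rpow, ← Real.rpow_one_add' hs (by norm_num),
    show -(3 : ℝ) / 2 = -(1 + 1 / 2) by norm_num, Real.rpow_neg hs]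

theorem hasDerivAt_inv_mul_sqrt {s : ℝ} (hs : 0 < s) :
    HasDerivAt (fun s : ℝ => (s * √s)⁻¹) (-(3 / 2) * (s ^ 2 * √s)⁻¹) s := by
  have hq : 0 < √s := Real.sqrt_pos.mpr hs
  refine (((hasDerivAt_id' s).mul (Real.hasDerivAt_sqrt hs.ne')).inv
    (mul_pos hs hq).ne').congr_deriv ?_
  simp only [Pi.mul_apply]
  field_simp
  rw [Real.sq_sqrt hs.le]
  ring

theorem integral_inv_sqrt {a b : ℝ} (ha : 0 < a) (hab : a ≤ b) :
    ∫ s in a..b, (√s)⁻¹ = 2 * √b - 2 * √a := by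
  have hpos : ∀ s ∈ uIcc a b, 0 < s := fun s hs => ha.trans_le (uIcc_of_le hab ▸ hs).1
  refine intervalIntegral.integral_eq_sub_of_hasDerivAt (f := fun s => 2 * √s) (fun s hs => ?_)
    (ContinuousOn.intervalIntegrable ?_)
  · refine ((Real.hasDerivAt_sqrt (hpos s hs).ne').const_mul 2).congr_deriv ?_
    field_simp
  · exact Real.continuous_sqrt.continuousOn.inv₀ fun s hs => (Real.sqrt_pos.2 (hpos s hs)).ne'

theorem integral_inv_sq_mul_sqrt {a b : ℝ} (ha : 0 < a) (hab : a ≤ b) :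
    ∫ s in a..b, (s ^ 2 * √s)⁻¹ = 2 / 3 * ((a * √a)⁻¹ - (b * √b)⁻¹) := by
  have hpos : ∀ s ∈ uIcc a b, 0 < s := fun s hs => ha.trans_le (uIcc_of_le hab ▸ hs).1
  rw [intervalIntegral.integral_eq_sub_of_hasDerivAt (f := fun s => -(2 / 3) * (s * √s)⁻¹)
    (fun s hs => ((hasDerivAt_inv_mul_sqrt (hpos s hs)).const_mul _).congr_deriv (by ring))]
  · ring
  · refine ContinuousOn.intervalIntegrable ?_
    exact ((continuous_pow 2).continuousOn.mul Real.continuous_sqrt.continuousOn).inv₀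
      fun s hs => by have := hpos s hs; simp only [Pi.mul_apply]; positivity

theorem inv_mul_sqrt_le {r s : ℝ} (hr : 0 < r) (h : r ≤ 2 * s) :
    (s * √s)⁻¹ ≤ 3 * (r * √r)⁻¹ := by
  have hs : 0 < s := by linarith
  have hsq : √r ≤ 3 / 2 * √s := by
    nlinarith [Real.sq_sqrt hr.le, Real.sq_sqrt hs.le, Real.sqrt_nonneg r, Real.sqrt_nonneg s]
  have key : r * √r ≤ 3 * (s * √s) := by
    nlinarith [Real.sq_sqrt hr.le, Real.sq_sqrt hs.le, Real.sqrt_nonneg r, Real.sqrt_nonneg s,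
      mul_le_mul_of_nonneg_left hsq (Real.sqrt_nonneg r)]
  calc (s * √s)⁻¹ = 3 * (3 * (s * √s))⁻¹ := by field_simp
    _ ≤ 3 * (r * √r)⁻¹ := by gcongr

theorem inv_sq_mul_sqrt_le {r s : ℝ} (hr : 0 < r) (h : r ≤ 2 * s) :
    (s ^ 2 * √s)⁻¹ ≤ 6 * (r ^ 2 * √r)⁻¹ := by
  have hs : 0 < s := by linarith
  have hsq : √r ≤ 3 / 2 * √s := by
    nlinarith [Real.sq_sqrt hr.le, Real.sq_sqrt hs.le, Real.sqrt_nonneg r, Real.sqrt_nonneg s]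
  have key : r ^ 2 * √r ≤ 6 * (s ^ 2 * √s) := by
    have : r ^ 2 ≤ 4 * s ^ 2 := by nlinarith
    nlinarith [mul_le_mul this hsq (Real.sqrt_nonneg r) (by positivity)]
  calc (s ^ 2 * √s)⁻¹ = 6 * (6 * (s ^ 2 * √s))⁻¹ := by field_simp
    _ ≤ 6 * (r ^ 2 * √r)⁻¹ := by gcongr

theorem inv_mul_sqrt_div_le {r m D c : ℝ} (hr : 0 < r) (hm : 0 < m) (hD : 0 < D)
    (h : D ≤ c * r * m) : (r * √r)⁻¹ / m ≤ c * (√r)⁻¹ / D := by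
  have hpr : 0 < √r := Real.sqrt_pos.2 hr
  rw [div_le_div_iff₀ hm hD]
  calc (r * √r)⁻¹ * D ≤ (r * √r)⁻¹ * (c * r * m) := by gcongr
    _ = c * (√r)⁻¹ * m := by field_simp

namespace Gker

noncomputable section

def phase (ε r t s : ℝ) : ℂ :=
  I * (((s : ℂ) - (t : ℂ)) * (1 / 4 + (ε : ℂ) * I) + (r : ℂ) ^ 2 / (4 * (s : ℂ)))

def integrand (ε r t s : ℝ) : ℂ := exp (phase ε r t s) * ((s ^ (-(3 : ℝ) / 2) : ℝ) : ℂ)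

def phaseDeriv (ε r s : ℝ) : ℂ := ⟨-ε, 1 / 4 - r ^ 2 / (4 * s ^ 2)⟩

/-- The amplitude `s^{-3/2}`, written as `(s √s)⁻¹`, over `phaseDeriv`. -/
def weight (ε r s : ℝ) : ℂ := (((s * √s)⁻¹ : ℝ) : ℂ) / phaseDeriv ε r s

def weightDeriv (ε r s : ℝ) : ℂ :=
  ((-(3 / 2) * (s ^ 2 * √s)⁻¹ : ℝ) : ℂ) / phaseDeriv ε r s
    - (((s * √s)⁻¹ * (r ^ 2 / (2 * s ^ 3)) : ℝ) : ℂ) * I / phaseDeriv ε r s ^ 2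

def denom (ε r t : ℝ) : ℝ := ε * r + √r + max (t - r) 0

end

variable {ε r t : ℝ}

theorem phase_re (ε r t s : ℝ) : (phase ε r t s).re = -ε * (s - t) := by
  rw [phase, show (r : ℂ) ^ 2 / (4 * (s : ℂ)) = ((r ^ 2 / (4 * s) : ℝ) : ℂ) by push_cast; ring]
  simp only [mul_re, I_re, I_im, add_re, add_im, mul_im, sub_re, sub_im, ofReal_re, ofReal_im]
  norm_num
  ring

theorem phase_re_nonpos (hε : 0 ≤ ε) (r : ℝ) {s : ℝ} (hts : t ≤ s) : (phase ε r t s).re ≤ 0 := by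
  rw [phase_re]
  nlinarith

theorem phaseDeriv_eq (ε r s : ℝ) :
    phaseDeriv ε r s = I * (1 / 4 + (ε : ℂ) * I - (r : ℂ) ^ 2 / (4 * (s : ℂ) ^ 2)) := by
  rw [show (r : ℂ) ^ 2 / (4 * (s : ℂ) ^ 2) = ((r ^ 2 / (4 * s ^ 2) : ℝ) : ℂ) by push_cast; ring]
  apply Complex.ext <;>
    simp only [phaseDeriv, mul_re, I_re, I_im, add_re, add_im, mul_im, sub_re, sub_im, ofReal_re,
      ofReal_im] <;>
    norm_num

theorem hasDerivAt_phase (ε r t : ℝ) {s : ℝ} (hs : s ≠ 0) :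
    HasDerivAt (phase ε r t) (phaseDeriv ε r s) s := by
  have hs' : (s : ℂ) ≠ 0 := by exact_mod_cast hs
  have h : HasDerivAt (fun z : ℂ => I * ((z - t) * (1 / 4 + (ε : ℂ) * I) + (r : ℂ) ^ 2 / (4 * z)))
      (phaseDeriv ε r s) s := by
    refine (((((hasDerivAt_id' (s : ℂ)).sub_const (t : ℂ)).mul_const (1 / 4 + (ε : ℂ) * I)).add
      ((hasDerivAt_const (s : ℂ) ((r : ℂ) ^ 2)).div ((hasDerivAt_id' (s : ℂ)).const_mul 4)
        (by simpa using hs'))).const_mul I).congr_deriv ?_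
    rw [phaseDeriv_eq]
    field_simp
    ring
  exact h.comp_ofReal

theorem hasDerivAt_phaseDeriv (ε r : ℝ) {s : ℝ} (hs : s ≠ 0) :
    HasDerivAt (phaseDeriv ε r) (((r ^ 2 / (2 * s ^ 3) : ℝ) : ℂ) * I) s := by
  have h : HasDerivAt (fun s : ℝ => 1 / 4 - r ^ 2 / (4 * s ^ 2)) (r ^ 2 / (2 * s ^ 3)) s := by
    refine ((hasDerivAt_const s (r ^ 2)).div ((hasDerivAt_pow 2 s).const_mul 4)
      (by positivity)).const_sub (1 / 4) |>.congr_deriv ?_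
    field_simp
    ring
  have he : phaseDeriv ε r =
      fun s : ℝ => ((-ε : ℝ) : ℂ) + ((1 / 4 - r ^ 2 / (4 * s ^ 2) : ℝ) : ℂ) * I := by
    funext s
    exact Complex.mk_eq_add_mul_I _ _
  rw [he]
  simpa using (h.ofReal_comp.mul_const I).const_add ((-ε : ℝ) : ℂ)

theorem phaseDeriv_ne_zero (hε : 0 < ε) (r s : ℝ) : phaseDeriv ε r s ≠ 0 := by
  intro h
  have := congrArg Complex.re h
  simp only [phaseDeriv, zero_re] at this
  linarith

theorem continuousOn_phaseDeriv (ε r : ℝ) : ContinuousOn (phaseDeriv ε r) (Ioi 0) :=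
  fun _ hs => (hasDerivAt_phaseDeriv ε r (ne_of_gt hs)).continuousAt.continuousWithinAt

theorem continuousOn_weightDeriv (hε : 0 < ε) (r : ℝ) : ContinuousOn (weightDeriv ε r) (Ioi 0) := by
  have := continuousOn_phaseDeriv ε r
  unfold weightDeriv
  fun_prop (disch := intro s hs; simp only [mem_Ioi] at hs; first
    | positivity
    | exact pow_ne_zero _ (phaseDeriv_ne_zero hε r s)
    | exact phaseDeriv_ne_zero hε r s)

theorem hasDerivAt_weight (hε : 0 < ε) (r : ℝ) {s : ℝ} (hs : 0 < s) :
    HasDerivAt (weight ε r) (weightDeriv ε r s) s := by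
  have hψ := phaseDeriv_ne_zero hε r s
  refine ((hasDerivAt_inv_mul_sqrt hs).ofReal_comp.div (hasDerivAt_phaseDeriv ε r hs.ne')
    hψ).congr_deriv ?_
  simp only [weightDeriv]
  field_simp
  push_cast
  ring

theorem norm_weight {s : ℝ} (hs : 0 < s) :
    ‖weight ε r s‖ = (s * √s)⁻¹ / ‖phaseDeriv ε r s‖ := by
  rw [weight, norm_div, norm_real, Real.norm_of_nonneg (by positivity)]

theorem norm_weightDeriv_le {s : ℝ} (hs : 0 < s) :
    ‖weightDeriv ε r s‖ ≤ 3 / 2 * (s ^ 2 * √s)⁻¹ / ‖phaseDeriv ε r s‖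
      + (s * √s)⁻¹ * (r ^ 2 / (2 * s ^ 3)) / ‖phaseDeriv ε r s‖ ^ 2 := by
  refine (norm_sub_le _ _).trans (le_of_eq ?_)
  rw [norm_div, norm_div, norm_mul, norm_I, mul_one, norm_pow, norm_real, norm_real,
    Real.norm_of_nonneg (by positivity : 0 ≤ (s * √s)⁻¹ * (r ^ 2 / (2 * s ^ 3))),
    Real.norm_eq_abs, abs_mul, abs_of_nonneg (by positivity : 0 ≤ (s ^ 2 * √s)⁻¹)]
  norm_num

theorem le_norm_phaseDeriv (hε : 0 ≤ ε) (r s : ℝ) : ε ≤ ‖phaseDeriv ε r s‖ := by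
  simpa [phaseDeriv, abs_of_nonneg hε] using abs_re_le_norm (phaseDeriv ε r s)

theorem abs_im_le_norm_phaseDeriv (ε r s : ℝ) :
    |1 / 4 - r ^ 2 / (4 * s ^ 2)| ≤ ‖phaseDeriv ε r s‖ :=
  abs_im_le_norm (phaseDeriv ε r s)

theorem sq_div_le_norm_phaseDeriv {s : ℝ} (hs : 0 < s) (h : 2 * s ≤ r) :
    3 * r ^ 2 / (16 * s ^ 2) ≤ ‖phaseDeriv ε r s‖ := by
  refine le_trans ?_ ((neg_le_abs _).trans (abs_im_le_norm_phaseDeriv ε r s))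
  have he : 1 / 4 - r ^ 2 / (4 * s ^ 2)
      = -(3 * r ^ 2 / (16 * s ^ 2)) - (r ^ 2 - 4 * s ^ 2) / (16 * s ^ 2) := by
    field_simp
    ring
  have : 0 ≤ (r ^ 2 - 4 * s ^ 2) / (16 * s ^ 2) := div_nonneg (by nlinarith) (by positivity)
  linarith

theorem three_div_sixteen_le_norm_phaseDeriv {s : ℝ} (hr : 0 < r) (h : 2 * r ≤ s) :
    3 / 16 ≤ ‖phaseDeriv ε r s‖ := by
  refine le_trans ?_ ((le_abs_self _).trans (abs_im_le_norm_phaseDeriv ε r s))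
  have : r ^ 2 / (4 * s ^ 2) ≤ 1 / 16 := by
    rw [div_le_iff₀ (by nlinarith)]
    nlinarith
  linarith

theorem abs_sub_div_le_norm_phaseDeriv {s : ℝ} (hr : 0 < r) (hs : 0 < s) (h : s ≤ 2 * r) :
    |s - r| / (8 * r) ≤ ‖phaseDeriv ε r s‖ := by
  refine le_trans ?_ (abs_im_le_norm_phaseDeriv ε r s)
  have he : 1 / 4 - r ^ 2 / (4 * s ^ 2) = (s - r) * ((s + r) / (4 * s ^ 2)) := by
    field_simp
    ring
  rw [he, abs_mul, abs_of_pos (by positivity : 0 < (s + r) / (4 * s ^ 2)), div_eq_mul_inv]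
  refine mul_le_mul_of_nonneg_left ?_ (abs_nonneg _)
  rw [inv_le_iff_one_le_mul₀ (by positivity), div_mul_eq_mul_div, le_div_iff₀ (by positivity)]
  nlinarith

theorem integrand_eq (hε : 0 < ε) (r t : ℝ) {s : ℝ} (hs : 0 < s) :
    integrand ε r t s = exp (phase ε r t s) * (phaseDeriv ε r s * weight ε r s) := by
  rw [integrand, weight, mul_div_cancel₀ _ (phaseDeriv_ne_zero hε r s), rpow_neg_three_halves hs.le]

theorem norm_integrand_le (hε : 0 ≤ ε) (r : ℝ) {s : ℝ} (hs : 0 < s) (hts : t ≤ s) :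
    ‖integrand ε r t s‖ ≤ (s * √s)⁻¹ := by
  refine (norm_exp_mul_le (phase_re_nonpos hε r hts) _).trans_eq ?_
  rw [rpow_neg_three_halves hs.le, norm_real, Real.norm_of_nonneg (by positivity)]

theorem continuousOn_integrand (ε r t : ℝ) : ContinuousOn (integrand ε r t) (Ioi 0) :=
  (ContinuousOn.cexp fun _ hs =>
      (hasDerivAt_phase ε r t (ne_of_gt hs)).continuousAt.continuousWithinAt).mul
    (continuous_ofReal.comp_continuousOn
      (continuousOn_id.rpow_const fun _ hs => Or.inl (ne_of_gt hs)))

theorem norm_integral_integrand_le_of_bounds {a b W : ℝ} {g : ℝ → ℝ} (hε : 0 < ε) (ha : 0 < a)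
    (hta : t ≤ a) (hab : a ≤ b) (hg : IntervalIntegrable g volume a b)
    (hW : ∀ s ∈ Icc a b, ‖weight ε r s‖ ≤ W) (hW' : ∀ s ∈ Icc a b, ‖weightDeriv ε r s‖ ≤ g s) :
    ‖∫ s in a..b, integrand ε r t s‖ ≤ 2 * W + ∫ s in a..b, g s := by
  have hpos : ∀ s ∈ Icc a b, 0 < s := fun s hs => ha.trans_le hs.1
  rw [intervalIntegral.integral_congr fun s hs =>
    integrand_eq hε r t (hpos s (uIcc_of_le hab ▸ hs))]
  refine (norm_integral_exp_mul_le hab (fun s hs => hasDerivAt_phase ε r t (hpos s hs).ne')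
    (fun s hs => hasDerivAt_weight hε r (hpos s hs))
    ((continuousOn_phaseDeriv ε r).mono hpos) ((continuousOn_weightDeriv hε r).mono hpos)
    (fun s hs => phase_re_nonpos hε.le r (hta.trans hs.1))).trans ?_
  have hint := intervalIntegral.integral_mono_on hab
    (((continuousOn_weightDeriv hε r).mono hpos).norm.intervalIntegrable_of_Icc hab) hg hW'
  linarith [hW a ⟨le_rfl, hab⟩, hW b ⟨hab, le_rfl⟩]

theorem norm_weight_le_of_le_half (hr : 0 < r) {s : ℝ} (hs : 0 < s) (h : 2 * s ≤ r) :
    ‖weight ε r s‖ ≤ 6 * (r * √r)⁻¹ := by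
  rw [norm_weight hs]
  refine (div_le_div_of_nonneg_left (by positivity) (by positivity)
    (sq_div_le_norm_phaseDeriv hs h)).trans ?_
  have hsr : √s ≤ √r := Real.sqrt_le_sqrt (by linarith)
  have hss : √s ^ 2 = s := Real.sq_sqrt hs.le
  have hrr : √r ^ 2 = r := Real.sq_sqrt hr.le
  have hps : 0 < √s := Real.sqrt_pos.2 hs
  rw [div_le_iff₀ (by positivity)]
  field_simp
  nlinarith [mul_le_mul_of_nonneg_left hsr (by positivity : 0 ≤ √s * r)]

theorem norm_weightDeriv_le_of_le_half {s : ℝ} (hs : 0 < s) (h : 2 * s ≤ r) :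
    ‖weightDeriv ε r s‖ ≤ 23 / r ^ 2 * (√s)⁻¹ := by
  have hψ := sq_div_le_norm_phaseDeriv (ε := ε) hs h
  have hr : 0 < r := by linarith
  have hps : 0 < √s := Real.sqrt_pos.2 hs
  calc ‖weightDeriv ε r s‖
      ≤ 3 / 2 * (s ^ 2 * √s)⁻¹ / (3 * r ^ 2 / (16 * s ^ 2))
        + (s * √s)⁻¹ * (r ^ 2 / (2 * s ^ 3)) / (3 * r ^ 2 / (16 * s ^ 2)) ^ 2 := by
        refine (norm_weightDeriv_le hs).trans ?_
        gcongr
    _ = 200 / 9 / r ^ 2 * (√s)⁻¹ := by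
        field_simp
        ring
    _ ≤ 23 / r ^ 2 * (√s)⁻¹ := by gcongr; norm_num

theorem norm_integral_integrand_le_of_le_half (hε : 0 < ε) (hr : 0 < r) {a b : ℝ} (ha : 0 < a)
    (hta : t ≤ a) (hab : a ≤ b) (hb : 2 * b ≤ r) :
    ‖∫ s in a..b, integrand ε r t s‖ ≤ 58 * (r * √r)⁻¹ := by
  have hpos : ∀ s ∈ uIcc a b, 0 < s := fun s hs => ha.trans_le (uIcc_of_le hab ▸ hs).1
  refine (norm_integral_integrand_le_of_bounds hε ha hta hab (g := fun s => 23 / r ^ 2 * (√s)⁻¹)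
    ((continuousOn_const.mul (Real.continuous_sqrt.continuousOn.inv₀ fun s hs =>
      (Real.sqrt_pos.2 (hpos s hs)).ne')).intervalIntegrable)
    (fun s hs => norm_weight_le_of_le_half hr (ha.trans_le hs.1) (by linarith [hs.2]))
    (fun s hs => norm_weightDeriv_le_of_le_half (ha.trans_le hs.1) (by linarith [hs.2]))).trans ?_
  rw [intervalIntegral.integral_const_mul, integral_inv_sqrt ha hab]
  have hbr : √b ≤ √r := Real.sqrt_le_sqrt (by linarith)
  calc 2 * (6 * (r * √r)⁻¹) + 23 / r ^ 2 * (2 * √b - 2 * √a)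
      ≤ 2 * (6 * (r * √r)⁻¹) + 23 / r ^ 2 * (2 * √r) := by
        gcongr
        linarith [Real.sqrt_nonneg a]
    _ = 58 * (r * √r)⁻¹ := by
        have hpr : 0 < √r := Real.sqrt_pos.2 hr
        field_simp
        rw [Real.sq_sqrt hr.le]
        ring

theorem norm_weight_le_of_two_mul_le (hr : 0 < r) {s : ℝ} (h : 2 * r ≤ s) :
    ‖weight ε r s‖ ≤ 6 * (r * √r)⁻¹ := by
  have hs : 0 < s := by linarith
  rw [norm_weight hs]
  calc (s * √s)⁻¹ / ‖phaseDeriv ε r s‖ ≤ (s * √s)⁻¹ / (3 / 16) :=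
        div_le_div_of_nonneg_left (by positivity) (by norm_num)
          (three_div_sixteen_le_norm_phaseDeriv hr h)
    _ ≤ (r * √r)⁻¹ / (3 / 16) := by gcongr <;> linarith
    _ ≤ 6 * (r * √r)⁻¹ := by
        rw [div_le_iff₀ (by norm_num)]
        nlinarith [inv_pos.2 (by positivity : 0 < r * √r)]

theorem norm_weightDeriv_le_of_two_mul_le (hr : 0 < r) {s : ℝ} (h : 2 * r ≤ s) :
    ‖weightDeriv ε r s‖ ≤ 12 * (s ^ 2 * √s)⁻¹ := by
  have hs : 0 < s := by linarith
  have hps : 0 < √s := Real.sqrt_pos.2 hs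
  have hψ := three_div_sixteen_le_norm_phaseDeriv (ε := ε) hr h
  calc ‖weightDeriv ε r s‖
      ≤ 3 / 2 * (s ^ 2 * √s)⁻¹ / (3 / 16)
        + (s * √s)⁻¹ * (s ^ 2 / 4 / (2 * s ^ 3)) / (3 / 16) ^ 2 := by
        refine (norm_weightDeriv_le hs).trans ?_
        gcongr
        nlinarith
    _ ≤ 12 * (s ^ 2 * √s)⁻¹ := by
        field_simp
        nlinarith

theorem norm_integral_integrand_le_of_two_mul_le (hε : 0 < ε) (hr : 0 < r) {a b : ℝ}
    (hta : t ≤ a) (hab : a ≤ b) (ha : 2 * r ≤ a) :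
    ‖∫ s in a..b, integrand ε r t s‖ ≤ 20 * (r * √r)⁻¹ := by
  have ha0 : 0 < a := by linarith
  have hpos : ∀ s ∈ uIcc a b, 0 < s := fun s hs => ha0.trans_le (uIcc_of_le hab ▸ hs).1
  refine (norm_integral_integrand_le_of_bounds hε ha0 hta hab (g := fun s => 12 * (s ^ 2 * √s)⁻¹)
    ((continuousOn_const.mul (((continuous_pow 2).continuousOn.mul
      Real.continuous_sqrt.continuousOn).inv₀ fun s hs => by
        have := hpos s hs; simp only [Pi.mul_apply]; positivity)).intervalIntegrable)
    (fun s hs => norm_weight_le_of_two_mul_le hr (ha.trans hs.1))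
    (fun s hs => norm_weightDeriv_le_of_two_mul_le hr (ha.trans hs.1))).trans ?_
  rw [intervalIntegral.integral_const_mul, integral_inv_sq_mul_sqrt ha0 hab]
  have : (a * √a)⁻¹ ≤ (r * √r)⁻¹ := by gcongr <;> linarith
  have : 0 ≤ (b * √b)⁻¹ := by have := hpos b right_mem_uIcc; positivity
  linarith

theorem norm_integral_integrand_le_of_half_le (hε : 0 ≤ ε) (hr : 0 < r) {a b : ℝ} (hta : t ≤ a)
    (ha : r ≤ 2 * a) (hab : a ≤ b) :
    ‖∫ s in a..b, integrand ε r t s‖ ≤ 3 * (r * √r)⁻¹ * (b - a) := by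
  refine (intervalIntegral.norm_integral_le_of_norm_le_const fun s hs => ?_).trans_eq
    (by rw [abs_of_nonneg (sub_nonneg.2 hab)])
  rw [uIoc_of_le hab] at hs
  exact (norm_integrand_le hε r (by linarith [hs.1]) (hta.trans hs.1.le)).trans
    (inv_mul_sqrt_le hr (by linarith [hs.1]))

theorem max_le_norm_phaseDeriv (hε : 0 ≤ ε) (hr : 0 < r) {s ℓ : ℝ} (hs : 0 < s)
    (h : s ≤ 2 * r) (hℓ : ℓ ≤ |s - r|) : max ε (ℓ / (8 * r)) ≤ ‖phaseDeriv ε r s‖ :=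
  max_le (le_norm_phaseDeriv hε r s) ((div_le_div_of_nonneg_right hℓ (by positivity)).trans
    (abs_sub_div_le_norm_phaseDeriv hr hs h))

theorem norm_weight_le_of_le_abs_sub (hε : 0 < ε) (hr : 0 < r) {s ℓ : ℝ} (h₁ : r ≤ 2 * s)
    (h₂ : s ≤ 2 * r) (hℓ : ℓ ≤ |s - r|) :
    ‖weight ε r s‖ ≤ 3 * (r * √r)⁻¹ / max ε (ℓ / (8 * r)) := by
  have hs : 0 < s := by linarith
  rw [norm_weight hs]
  exact div_le_div₀ (by positivity) (inv_mul_sqrt_le hr h₁) (lt_max_of_lt_left hε)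
    (max_le_norm_phaseDeriv hε.le hr hs h₂ hℓ)

theorem norm_weightDeriv_le_of_le_abs_sub (hε : 0 < ε) (hr : 0 < r) {s ℓ : ℝ} (h₁ : r ≤ 2 * s)
    (h₂ : s ≤ 2 * r) (hℓ : ℓ ≤ |s - r|) :
    ‖weightDeriv ε r s‖ ≤ 9 * (r ^ 2 * √r)⁻¹ / max ε (ℓ / (8 * r))
      + 24 * (r ^ 2 * √r)⁻¹ * (max ε (ℓ / (8 * r)) ^ 2 + ((s - r) / (8 * r)) ^ 2)⁻¹ := by
  set m := max ε (ℓ / (8 * r))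
  have hs : 0 < s := by linarith
  have hm : 0 < m := lt_max_of_lt_left hε
  have hψ := max_le_norm_phaseDeriv hε.le hr hs h₂ hℓ
  have hψ2 : m ^ 2 + ((s - r) / (8 * r)) ^ 2 ≤ 2 * ‖phaseDeriv ε r s‖ ^ 2 := by
    have h1 : ((s - r) / (8 * r)) ^ 2 ≤ ‖phaseDeriv ε r s‖ ^ 2 := by
      rw [← sq_abs, abs_div, abs_of_pos (by positivity : 0 < 8 * r)]
      exact pow_le_pow_left₀ (by positivity) (abs_sub_div_le_norm_phaseDeriv hr hs h₂) 2
    nlinarith [pow_le_pow_left₀ hm.le hψ 2]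
  have hamp : (s * √s)⁻¹ * (r ^ 2 / (2 * s ^ 3)) ≤ 12 * (r ^ 2 * √r)⁻¹ := by
    have h4 : r ^ 2 / (2 * s ^ 3) ≤ 4 / r := by
      rw [div_le_div_iff₀ (by positivity) hr]
      nlinarith [pow_le_pow_left₀ hr.le h₁ 3]
    have hpr : 0 < √r := Real.sqrt_pos.2 hr
    calc (s * √s)⁻¹ * (r ^ 2 / (2 * s ^ 3)) ≤ 3 * (r * √r)⁻¹ * (4 / r) :=
          mul_le_mul (inv_mul_sqrt_le hr h₁) h4 (by positivity) (by positivity)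
      _ = 12 * (r ^ 2 * √r)⁻¹ := by field_simp; ring
  refine (norm_weightDeriv_le hs).trans (add_le_add ?_ ?_)
  · calc 3 / 2 * (s ^ 2 * √s)⁻¹ / ‖phaseDeriv ε r s‖ ≤ 3 / 2 * (6 * (r ^ 2 * √r)⁻¹) / m := by
          gcongr
          exact inv_sq_mul_sqrt_le hr h₁
      _ = 9 * (r ^ 2 * √r)⁻¹ / m := by ring
  · calc (s * √s)⁻¹ * (r ^ 2 / (2 * s ^ 3)) / ‖phaseDeriv ε r s‖ ^ 2
        ≤ 12 * (r ^ 2 * √r)⁻¹ / ((m ^ 2 + ((s - r) / (8 * r)) ^ 2) / 2) :=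
          div_le_div₀ (by positivity) hamp (by positivity) (by linarith)
      _ = 24 * (r ^ 2 * √r)⁻¹ * (m ^ 2 + ((s - r) / (8 * r)) ^ 2)⁻¹ := by
          field_simp
          ring

theorem norm_integral_integrand_le_of_le_abs_sub (hε : 0 < ε) (hr : 0 < r) {a b ℓ : ℝ}
    (hta : t ≤ a) (ha : r ≤ 2 * a) (hab : a ≤ b) (hb : b ≤ 2 * r)
    (hℓ : ∀ s ∈ Icc a b, ℓ ≤ |s - r|) :
    ‖∫ s in a..b, integrand ε r t s‖ ≤ 630 * (r * √r)⁻¹ / max ε (ℓ / (8 * r)) := by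
  set m := max ε (ℓ / (8 * r))
  set V := (r ^ 2 * √r)⁻¹
  have hm : 0 < m := lt_max_of_lt_left hε
  have ha0 : 0 < a := by linarith
  have hlor : Continuous fun s => (m ^ 2 + ((s - r) / (8 * r)) ^ 2)⁻¹ :=
    (by fun_prop : Continuous fun s => m ^ 2 + ((s - r) / (8 * r)) ^ 2).inv₀ fun _ => by positivity
  refine (norm_integral_integrand_le_of_bounds hε ha0 hta hab
    (g := fun s => 9 * V / m + 24 * V * (m ^ 2 + ((s - r) / (8 * r)) ^ 2)⁻¹)
    ((continuous_const.add (continuous_const.mul hlor)).intervalIntegrable _ _)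
    (fun s hs => norm_weight_le_of_le_abs_sub hε hr (by linarith [hs.1]) (hs.2.trans hb) (hℓ s hs))
    (fun s hs => norm_weightDeriv_le_of_le_abs_sub hε hr (by linarith [hs.1]) (hs.2.trans hb)
      (hℓ s hs))).trans ?_
  rw [intervalIntegral.integral_add intervalIntegrable_const
      ((hlor.intervalIntegrable _ _).const_mul _),
    intervalIntegral.integral_const, intervalIntegral.integral_const_mul, smul_eq_mul]
  have hint := integral_inv_sq_add_sq_div_le hm (by positivity : 0 < 8 * r) r a b
  have hrV : r * V = (r * √r)⁻¹ := by
    have hpr : 0 < √r := Real.sqrt_pos.2 hr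
    simp only [V]
    field_simp
  calc 2 * (3 * (r * √r)⁻¹ / m)
        + ((b - a) * (9 * V / m) + 24 * V * ∫ s in a..b, (m ^ 2 + ((s - r) / (8 * r)) ^ 2)⁻¹)
      ≤ 2 * (3 * (r * √r)⁻¹ / m) + (2 * r * (9 * V / m) + 24 * V * (Real.pi * (8 * r) / m)) := by
        gcongr
        linarith
    _ = (24 + 192 * Real.pi) * (r * √r)⁻¹ / m := by rw [← hrV]; ring
    _ ≤ 630 * (r * √r)⁻¹ / m := by
        gcongr
        linarith [Real.pi_lt_d2]

theorem one_lt_denom (hε : 0 ≤ ε) (hr : 1 < r) : 1 < denom ε r t := by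
  have h₁ : 1 < √r := by simpa using Real.sqrt_lt_sqrt zero_le_one hr
  have h₂ : 0 ≤ max (t - r) 0 := le_max_right _ _
  unfold denom
  nlinarith

theorem denom_le (hε1 : ε ≤ 1) (hr : 1 ≤ r) (ht : t ≤ 100 * r) : denom ε r t ≤ 101 * r := by
  have h₁ : √r ≤ r := by
    nlinarith [Real.sq_sqrt (zero_le_one.trans hr), Real.sqrt_nonneg r,
      (by simpa using Real.sqrt_le_sqrt hr : 1 ≤ √r)]
  have h₂ : max (t - r) 0 ≤ 99 * r := max_le (by linarith) (by linarith)
  unfold denom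
  nlinarith

theorem denom_le_mul_max (hr : 0 < r) {ℓ : ℝ} (hℓ : 0 < ℓ)
    (hL : r ≤ 2 * denom ε r t * ℓ) (ht : t - r ≤ ℓ) :
    denom ε r t ≤ 64 * r * max ε (ℓ / (8 * r)) := by
  set m := max ε (ℓ / (8 * r))
  have hεm : ε ≤ m := le_max_left _ _
  have hℓm : ℓ ≤ 8 * r * m := by
    have := le_max_right ε (ℓ / (8 * r))
    rwa [div_le_iff₀ (by positivity), mul_comm] at this
  have hM : max (t - r) 0 ≤ ℓ := max_le ht hℓ.le
  have hrr := Real.sq_sqrt hr.le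
  have hpr := Real.sqrt_pos.2 hr
  unfold denom at hL ⊢
  rcases le_or_gt (√r) (6 * ℓ) with h | h
  · nlinarith
  · have h₁ : √r * √r < (ε * r + √r + max (t - r) 0) * √r / 3 := by nlinarith
    have h₂ : √r < (ε * r + √r + max (t - r) 0) / 3 := by nlinarith
    nlinarith

theorem intervalIntegrable_integrand (ε r t : ℝ) {a b : ℝ} (ha : 0 < a) (hb : 0 < b) :
    IntervalIntegrable (integrand ε r t) volume a b :=
  ((continuousOn_integrand ε r t).mono fun _ hs =>
    lt_of_lt_of_le (lt_min ha hb) hs.1).intervalIntegrable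

theorem norm_integral_integrand_le_denom_of_le_abs_sub (hε : 0 < ε) (hr : 0 < r) {a b ℓ : ℝ}
    (hta : t ≤ a) (ha : r ≤ 2 * a) (hab : a ≤ b) (hb : b ≤ 2 * r) (hℓ0 : 0 < ℓ)
    (hℓ : ∀ s ∈ Icc a b, ℓ ≤ |s - r|) (hL : r ≤ 2 * denom ε r t * ℓ) (ht : t - r ≤ ℓ) :
    ‖∫ s in a..b, integrand ε r t s‖ ≤ 40320 * (√r)⁻¹ / denom ε r t := by
  have hD : 0 < denom ε r t := by
    have := mul_pos (mul_pos two_pos hr) hℓ0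
    nlinarith
  calc ‖∫ s in a..b, integrand ε r t s‖ ≤ 630 * ((r * √r)⁻¹ / max ε (ℓ / (8 * r))) := by
        rw [← mul_div_assoc]
        exact norm_integral_integrand_le_of_le_abs_sub hε hr hta ha hab hb hℓ
    _ ≤ 630 * (64 * (√r)⁻¹ / denom ε r t) := by
        refine mul_le_mul_of_nonneg_left ?_ (by norm_num)
        exact inv_mul_sqrt_div_le hr (lt_max_of_lt_left hε) hD (denom_le_mul_max hr hℓ0 hL ht)
    _ = 40320 * (√r)⁻¹ / denom ε r t := by ring

theorem norm_integral_integrand_window_le (hε : 0 ≤ ε) (hr : 0 < r) {L : ℝ} (hL₀ : 0 ≤ L)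
    (hL : 2 * L ≤ r) :
    ‖∫ s in max t (r - L)..max t (r + L), integrand ε r t s‖ ≤ 6 * L * (r * √r)⁻¹ := by
  have hc : r - L ≤ max t (r - L) := le_max_right _ _
  refine norm_integral_max_le (le_max_left _ _) (max_le_max le_rfl (by linarith)) (by positivity)
    fun htq => ?_
  refine (norm_integral_integrand_le_of_half_le hε hr (le_max_left _ _) (by linarith)
    (max_le htq.le (by linarith))).trans ?_
  calc 3 * (r * √r)⁻¹ * (r + L - max t (r - L)) ≤ 3 * (r * √r)⁻¹ * (2 * L) := by gcongr; linarith
    _ = 6 * L * (r * √r)⁻¹ := by ring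

theorem norm_integral_integrand_middle_le (hε : 0 < ε) (hr : 1 < r) :
    ‖∫ s in max t (r / 2)..max t (2 * r), integrand ε r t s‖ ≤ 80643 * (√r)⁻¹ / denom ε r t := by
  have hr0 : 0 < r := by linarith
  have hD := one_lt_denom (t := t) hε.le hr
  set D := denom ε r t
  set L := r / (2 * D)
  have hL : 0 < L := by positivity
  have hrL : r = 2 * D * L := by simp only [L]; field_simp
  have hL2 : 2 * L ≤ r := by nlinarith
  set c₁ := max t (r / 2)
  set c₂ := max t (r - L)
  set c₃ := max t (r + L)
  set c₄ := max t (2 * r)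
  have h₁ : r / 2 ≤ c₁ := le_max_right _ _
  have h₂ : r - L ≤ c₂ := le_max_right _ _
  have h₃ : r + L ≤ c₃ := le_max_right _ _
  have h₄ : 2 * r ≤ c₄ := le_max_right _ _
  have hleft : ‖∫ s in c₁..c₂, integrand ε r t s‖ ≤ 40320 * (√r)⁻¹ / D :=
    norm_integral_max_le (le_max_left _ _) (max_le_max le_rfl (by linarith)) (by positivity)
      fun htq => norm_integral_integrand_le_denom_of_le_abs_sub hε hr0 (le_max_left _ _)
        (by linarith) (max_le htq.le (by linarith)) (by linarith) hL
        (fun s hs => le_abs.2 (Or.inr (by linarith [hs.2]))) hrL.le (by linarith)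
  have hwindow : ‖∫ s in c₂..c₃, integrand ε r t s‖ ≤ 3 * (√r)⁻¹ / D := by
    have hpr : 0 < √r := Real.sqrt_pos.2 hr0
    refine (norm_integral_integrand_window_le hε.le hr0 hL.le hL2).trans_eq ?_
    simp only [L]
    field_simp
    norm_num
  have hright : ‖∫ s in c₃..c₄, integrand ε r t s‖ ≤ 40320 * (√r)⁻¹ / D :=
    norm_integral_max_le (le_max_left _ _) (max_le_max le_rfl (by linarith)) (by positivity)
      fun htq => norm_integral_integrand_le_denom_of_le_abs_sub hε hr0 (le_max_left _ _)
        (by linarith) (max_le htq.le (by linarith)) le_rfl (by linarith : 0 < c₃ - r)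
        (fun s hs => (by linarith [hs.1] : c₃ - r ≤ s - r).trans (le_abs_self _)) (by nlinarith)
        (by linarith [le_max_left t (r + L)])
  refine (norm_integral_le_add_add
    (intervalIntegrable_integrand ε r t (a := c₁) (b := c₂) (by linarith) (by linarith))
    (intervalIntegrable_integrand ε r t (a := c₂) (b := c₃) (by linarith) (by linarith))
    (intervalIntegrable_integrand ε r t (a := c₃) (b := c₄) (by linarith) (by linarith))).trans ?_
  simp only [mul_div_assoc] at hleft hwindow hright ⊢
  linarith

theorem norm_intervalIntegral_integrand_le (hε : 0 < ε) (hε1 : ε ≤ 1) (hr : 1 < r) (ht : 0 < t)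
    (htr : t ≤ 100 * r) {b : ℝ} (hb : max t (2 * r) ≤ b) :
    ‖∫ s in t..b, integrand ε r t s‖ ≤ 10 ^ 5 * (√r)⁻¹ / denom ε r t := by
  have hr0 : 0 < r := by linarith
  have hD := one_lt_denom (t := t) hε.le hr
  have hfar : (r * √r)⁻¹ ≤ 101 * (√r)⁻¹ / denom ε r t := by
    simpa using inv_mul_sqrt_div_le hr0 one_pos (by linarith)
      (by simpa using denom_le hε1 hr.le htr)
  have hleft : ‖∫ s in t..max t (r / 2), integrand ε r t s‖ ≤ 58 * (r * √r)⁻¹ :=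
    norm_integral_max_le le_rfl (le_max_left _ _) (by positivity) fun htq =>
      norm_integral_integrand_le_of_le_half hε hr0 ht le_rfl htq.le (by linarith)
  have hright : ‖∫ s in max t (2 * r)..b, integrand ε r t s‖ ≤ 20 * (r * √r)⁻¹ :=
    norm_integral_integrand_le_of_two_mul_le hε hr0 (le_max_left _ _) hb (le_max_right _ _)
  have h₁ : 0 < max t (r / 2) := ht.trans_le (le_max_left _ _)
  have h₂ : 0 < max t (2 * r) := ht.trans_le (le_max_left _ _)
  refine (norm_integral_le_add_add (intervalIntegrable_integrand ε r t ht h₁)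
    (intervalIntegrable_integrand ε r t h₁ h₂)
    (intervalIntegrable_integrand ε r t h₂ (h₂.trans_le hb))).trans ?_
  have hmiddle := norm_integral_integrand_middle_le (t := t) hε hr
  have hX : 0 ≤ (√r)⁻¹ / denom ε r t := by positivity
  simp only [mul_div_assoc] at hfar hmiddle ⊢
  linarith

theorem norm_setIntegral_integrand_le (hε : 0 < ε) (hε1 : ε ≤ 1) (hr : 1 < r) (ht : 0 < t)
    (htr : t ≤ 100 * r) :
    ‖∫ s in Ioi t, integrand ε r t s‖ ≤ 10 ^ 5 * (√r)⁻¹ / denom ε r t := by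
  have hint : IntegrableOn (integrand ε r t) (Ioi t) := by
    refine (integrableOn_Ioi_rpow_of_lt (by norm_num : -(3 : ℝ) / 2 < -1) ht).mono'
      (((continuousOn_integrand ε r t).mono fun s hs => ht.trans hs).aestronglyMeasurable
        measurableSet_Ioi) ?_
    filter_upwards [ae_restrict_mem measurableSet_Ioi] with s hs
    rw [rpow_neg_three_halves (ht.trans hs).le]
    exact norm_integrand_le hε.le r (ht.trans hs) hs.le
  exact le_of_tendsto (intervalIntegral_tendsto_integral_Ioi t hint tendsto_id).norm
    ((eventually_ge_atTop (max t (2 * r))).mono fun b hb =>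
      norm_intervalIntegral_integrand_le hε hε1 hr ht htr hb)

theorem norm_Gker_le (ε r t : ℝ) : ‖Gker ε r t‖ ≤ ‖∫ s in Ioi t, integrand ε r t s‖ := by
  rw [Gker, norm_mul]
  refine mul_le_of_le_one_left (norm_nonneg _) ?_
  rw [norm_div, ← ofReal_neg, norm_exp_ofReal_mul_I, norm_real, Real.norm_eq_abs]
  have : 1 ≤ Real.pi ^ ((3 : ℝ) / 2) :=
    Real.one_le_rpow (by linarith [Real.pi_gt_three]) (by norm_num)
  rw [div_le_one (by positivity), abs_of_pos (by positivity)]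
  linarith

end Gker

/-- There is an absolute constant `C > 0` such that for every `ε ∈ (0,1]` and all
`r, t > 0` with `r > 1` and `r > t/100`,
`|G_ε(r,t)| ≤ C · r^{-1/2} / (ε·r + r^{1/2} + max (t − r) 0)`. -/
theorem stmt0 :
    ∃ C : ℝ, 0 < C ∧
      ∀ ε ∈ Set.Ioc (0 : ℝ) 1, ∀ r t : ℝ, 0 < r → 0 < t → 1 < r → t / 100 < r →
        ‖Gker ε r t‖ ≤
          C * r ^ (-(1 : ℝ) / 2) / (ε * r + r ^ ((1 : ℝ) / 2) + max (t - r) 0) := by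
  refine ⟨10 ^ 5, by norm_num, fun ε hε r t hr0 ht hr htr => ?_⟩
  rw [neg_div, Real.rpow_neg hr0.le, ← Real.sqrt_eq_rpow]
  exact (Gker.norm_Gker_le ε r t).trans
    (Gker.norm_setIntegral_integrand_le hε.1 hε.2 hr ht (by linarith))
end

section
/- Let z ∈ ℂ with Re z > 0 and Im z > 0, and let r > 0, t > 0, δ > 0. Then (1/(4π² i r)) ∫_{-∞}^{∞} [ p · e^{-(δ+it)p² + irp} / (p² − z) ] dp = (i/(8π^{3/2})) ∫_0^{∞} e^{ isz + i r²/(4(s+t−iδ)) } · ( i(s+t−iδ) )^{-3/2} ds, where w^{-3/2} denotes the principal branch (well-defined since Re(i(s+t−iδ)) = δ > 0). Both integrals converge absolutely. -/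
/-!
Since `Im z > 0`, `(p² - z)⁻¹ = i ∫₀^∞ e^{-i(p² - z)s} ds`. Substituting this into the
`p`-integral gives a double integral over `ℝ × (0, ∞)` that converges absolutely thanks to the
factors `e^{-δp²}` and `e^{-s Im z}`. After Fubini, the inner `p`-integral is a first Gaussian
moment: `∫ p e^{-ap² + irp} dp = (ir/2) √π a^{-3/2} e^{-r²/(4a)}`, where
`a = δ + i(t + s) = i(s + t - iδ)` and `Re a = δ > 0`.
-/

open MeasureTheory Set Complex
open scoped Real

theorem Complex.ofReal_mul_cpow {x : ℝ} (hx : 0 < x) (w s : ℂ) :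
    ((x : ℂ) * w) ^ s = (x : ℂ) ^ s * w ^ s := by
  rcases eq_or_ne w 0 with rfl | hw
  · by_cases hs : s = 0 <;> simp [hs]
  have hx' : (x : ℂ) ≠ 0 := ofReal_ne_zero.2 hx.ne'
  rw [cpow_def_of_ne_zero (mul_ne_zero hx' hw), log_ofReal_mul hx hw, add_mul, exp_add,
    cpow_def_of_ne_zero hx', cpow_def_of_ne_zero hw, ofReal_log hx.le]

theorem Complex.ofReal_div_cpow {x : ℝ} (hx : 0 < x) {w : ℂ} (hw : w.arg ≠ π) (s : ℂ) :
    ((x : ℂ) / w) ^ s = (x : ℂ) ^ s * w ^ (-s) := by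
  rw [div_eq_mul_inv, ofReal_mul_cpow hx, inv_cpow _ _ hw, cpow_neg]

theorem integrable_mul_cexp_neg_mul_sq_add_I_mul {b : ℂ} (hb : 0 < b.re) (ξ : ℝ) :
    Integrable fun x : ℝ => x * cexp (-b * x ^ 2 + I * ξ * x) := by
  refine (integrable_mul_cexp_neg_mul_sq hb).congr' (by fun_prop) (ae_of_all _ fun x => ?_)
  simp only [norm_mul, norm_exp]
  congr 2
  simp [← ofReal_pow, mul_re]

theorem integral_mul_cexp_neg_mul_sq_add_I_mul_eq {b : ℂ} (hb : 0 < b.re) (ξ : ℝ) :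
    ∫ x : ℝ, x * cexp (-b * x ^ 2 + I * ξ * x) =
      I * ξ / (2 * b) * ∫ x : ℝ, cexp (-b * x ^ 2 + I * ξ * x) := by
  have hb0 : b ≠ 0 := by rintro rfl; simp at hb
  set g : ℝ → ℂ := fun x => cexp (-b * x ^ 2 + I * ξ * x) with hg_def
  have hg : Integrable g := by simpa [hg_def, neg_mul] using integrable_cexp_quadratic hb (I * ξ) 0
  have hxg := integrable_mul_cexp_neg_mul_sq_add_I_mul hb ξ
  have hderiv : ∀ x : ℝ, HasDerivAt g (I * ξ * g x - 2 * b * (x * g x)) x := by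
    intro x
    have h := ((((hasDerivAt_pow 2 (x : ℂ)).const_mul (-b)).add
      ((hasDerivAt_id (x : ℂ)).const_mul (I * ξ))).cexp).comp_ofReal
    convert h using 1
    · simp [hg_def]
    · simp [hg_def]; ring
  have hmoment := integral_eq_zero_of_hasDerivAt_of_integrable hderiv
    ((hg.const_mul _).sub (hxg.const_mul _)) hg
  rw [integral_sub (hg.const_mul _) (hxg.const_mul _), integral_const_mul, integral_const_mul,
    sub_eq_zero] at hmoment
  rw [div_mul_eq_mul_div, eq_div_iff (by simpa using hb0), hmoment]
  ring

theorem integral_mul_cexp_neg_mul_sq_add_I_mul {b : ℂ} (hb : 0 < b.re) (ξ : ℝ) :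
    ∫ x : ℝ, x * cexp (-b * x ^ 2 + I * ξ * x) =
      I * ξ / 2 * √π * b ^ (-(3 / 2) : ℂ) * cexp (-ξ ^ 2 / (4 * b)) := by
  have hb0 : b ≠ 0 := by rintro rfl; simp at hb
  have harg : b.arg ≠ π := fun h => (arg_eq_pi_iff.mp h).1.not_gt hb
  have hsqrt : ((π : ℝ) : ℂ) ^ (1 / 2 : ℂ) = √π := by
    rw [Real.sqrt_eq_rpow, ofReal_cpow Real.pi_pos.le]
    norm_num
  have hpow : b ^ (-(1 / 2) : ℂ) / b = b ^ (-(3 / 2) : ℂ) := by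
    rw [show (-(3 / 2) : ℂ) = -(1 / 2) + -1 by norm_num, cpow_add _ _ hb0, cpow_neg_one,
      div_eq_mul_inv]
  have hgauss := fourierIntegral_gaussian hb ξ
  simp only [← exp_add, add_comm (I * _ * _)] at hgauss
  rw [integral_mul_cexp_neg_mul_sq_add_I_mul_eq hb, hgauss, ofReal_div_cpow Real.pi_pos harg, hsqrt, ← hpow]
  ring

theorem inv_eq_I_mul_integral_cexp_Ioi {w : ℂ} (hw : w.im < 0) :
    w⁻¹ = I * ∫ s in Ioi (0 : ℝ), cexp (-I * w * s) := by
  have hw0 : w ≠ 0 := by rintro rfl; simp at hw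
  rw [integral_exp_mul_complex_Ioi (by simpa using hw) 0]
  field_simp
  simp

section GreenFunction

variable (z : ℂ) (r t δ : ℝ)

noncomputable def greenFourierIntegrand (p : ℝ) : ℂ :=
  p * cexp (-(δ + I * t) * p ^ 2 + I * r * p) / (p ^ 2 - z)

noncomputable def greenTimeIntegrand (s : ℝ) : ℂ :=
  cexp (I * s * z + I * r ^ 2 / (4 * (s + t - I * δ))) * (I * (s + t - I * δ)) ^ (-(3 / 2) : ℂ)

noncomputable def greenJointIntegrand (p s : ℝ) : ℂ :=
  p * I * cexp (-(δ + I * t) * p ^ 2 + I * r * p - I * (p ^ 2 - z) * s)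

theorem norm_greenJointIntegrand (p s : ℝ) :
    ‖greenJointIntegrand z r t δ p s‖ = |p| * Real.exp (-δ * p ^ 2) * Real.exp (-z.im * s) := by
  simp only [greenJointIntegrand, norm_mul, norm_exp, norm_real, Real.norm_eq_abs, norm_I,
    mul_assoc, ← Real.exp_add]
  congr 2
  simp [← ofReal_pow, mul_re, mul_im]
  ring

theorem integrable_greenJointIntegrand (hδ : 0 < δ) (hz : 0 < z.im) :
    Integrable (Function.uncurry (greenJointIntegrand z r t δ))
      ((volume : Measure ℝ).prod (volume.restrict (Ioi 0))) := by
  have hp : Integrable (fun p : ℝ => |p| * Real.exp (-δ * p ^ 2)) := by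
    simpa [abs_mul] using (integrable_mul_exp_neg_mul_sq hδ).abs
  have hcont : Continuous (Function.uncurry (greenJointIntegrand z r t δ)) := by
    unfold greenJointIntegrand; fun_prop
  exact (hp.mul_prod (exp_neg_integrableOn_Ioi 0 hz)).mono' hcont.aestronglyMeasurable
    (ae_of_all _ fun q => (norm_greenJointIntegrand z r t δ q.1 q.2).le)

theorem integral_Ioi_greenJointIntegrand (hz : 0 < z.im) (p : ℝ) :
    ∫ s in Ioi (0 : ℝ), greenJointIntegrand z r t δ p s = greenFourierIntegrand z r t δ p := by
  have him : ((p : ℂ) ^ 2 - z).im < 0 := by simp [← ofReal_pow, hz]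
  have hsplit : ∀ s : ℝ, greenJointIntegrand z r t δ p s =
      p * cexp (-(δ + I * t) * p ^ 2 + I * r * p) * (I * cexp (-I * (p ^ 2 - z) * s)) := by
    intro s
    rw [greenJointIntegrand, sub_eq_add_neg, exp_add]
    ring_nf
  simp only [hsplit, integral_const_mul, greenFourierIntegrand, div_eq_mul_inv,
    inv_eq_I_mul_integral_cexp_Ioi him]

theorem integral_greenJointIntegrand (hδ : 0 < δ) (s : ℝ) :
    ∫ p : ℝ, greenJointIntegrand z r t δ p s = -(r / 2 * √π) * greenTimeIntegrand z r t δ s := by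
  set w : ℂ := s + t - I * δ with hw_def
  have hw : 0 < (I * w).re := by simp [w, hδ]
  have hw0 : w ≠ 0 := by rintro h; simp [h] at hw
  have hsplit : ∀ p : ℝ, greenJointIntegrand z r t δ p s =
      I * cexp (I * s * z) * (p * cexp (-(I * w) * p ^ 2 + I * r * p)) := by
    intro p
    have hphase : -(δ + I * t) * p ^ 2 + I * r * p - I * (p ^ 2 - z) * s =
        I * s * z + (-(I * w) * p ^ 2 + I * r * p) := by
      linear_combination (-δ * p ^ 2 : ℂ) * I_sq
    rw [greenJointIntegrand, hphase, exp_add]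
    ring
  have hexp : -(r : ℂ) ^ 2 / (4 * (I * w)) = I * r ^ 2 / (4 * w) := by
    field_simp
    rw [I_sq, mul_neg_one]
  rw [integral_congr_ae (ae_of_all _ hsplit), integral_const_mul,
    integral_mul_cexp_neg_mul_sq_add_I_mul hw, greenTimeIntegrand, exp_add, hexp, ← hw_def]
  ring_nf
  rw [I_sq]
  ring

theorem integrable_greenFourierIntegrand (hδ : 0 < δ) (hz : 0 < z.im) :
    Integrable (greenFourierIntegrand z r t δ) :=
  (integrable_greenJointIntegrand z r t δ hδ hz).integral_prod_left.congr
    (ae_of_all _ (integral_Ioi_greenJointIntegrand z r t δ hz))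

theorem integrableOn_greenTimeIntegrand (hr : r ≠ 0) (hδ : 0 < δ) (hz : 0 < z.im) :
    IntegrableOn (greenTimeIntegrand z r t δ) (Ioi 0) := by
  have hK : IsUnit (-(r / 2 * √π) : ℂ) := by simp [hr, (Real.sqrt_pos.2 Real.pi_pos).ne']
  refine (integrable_const_mul_iff hK _).mp ?_
  exact (integrable_greenJointIntegrand z r t δ hδ hz).swap.integral_prod_left.congr
    (ae_of_all _ (integral_greenJointIntegrand z r t δ hδ))

theorem integral_greenFourierIntegrand (hδ : 0 < δ) (hz : 0 < z.im) :
    ∫ p, greenFourierIntegrand z r t δ p =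
      -(r / 2 * √π) * ∫ s in Ioi (0 : ℝ), greenTimeIntegrand z r t δ s := by
  calc ∫ p, greenFourierIntegrand z r t δ p
      = ∫ p, ∫ s in Ioi (0 : ℝ), greenJointIntegrand z r t δ p s := by
        simp_rw [integral_Ioi_greenJointIntegrand z r t δ hz]
    _ = ∫ s in Ioi (0 : ℝ), ∫ p, greenJointIntegrand z r t δ p s :=
        integral_integral_swap (integrable_greenJointIntegrand z r t δ hδ hz)
    _ = _ := by simp_rw [integral_greenJointIntegrand z r t δ hδ, integral_const_mul]

theorem green_prefactor_eq (hr : r ≠ 0) :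
    1 / (4 * (π : ℂ) ^ 2 * I * r) * -(r / 2 * √π) = I / ((8 * π ^ ((3 : ℝ) / 2) : ℝ) : ℂ) := by
  have hpow : π ^ ((3 : ℝ) / 2) = π * √π := by
    rw [Real.sqrt_eq_rpow, ← Real.rpow_one_add' Real.pi_pos.le (by norm_num)]
    norm_num
  have hsq : (√π : ℂ) ^ 2 = π := by rw [← ofReal_pow, Real.sq_sqrt Real.pi_pos.le]
  have hr' : (r : ℂ) ≠ 0 := ofReal_ne_zero.2 hr
  rw [hpow]
  push_cast
  field_simp
  linear_combination (-8 : ℂ) * hsq - 8 * (π : ℂ) * I_sq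

end GreenFunction

theorem stmt8_general (z : ℂ) (him : 0 < z.im) (r t δ : ℝ)
    (hr : 0 < r) (hδ : 0 < δ) :
    Integrable (fun p : ℝ =>
      (p : ℂ) * Complex.exp (-((δ : ℂ) + Complex.I * (t : ℂ)) * (p : ℂ) ^ 2
        + Complex.I * (r : ℂ) * (p : ℂ)) / ((p : ℂ) ^ 2 - z)) volume ∧
    IntegrableOn (fun s : ℝ =>
      Complex.exp (Complex.I * (s : ℂ) * z
          + Complex.I * (r : ℂ) ^ 2 / (4 * ((s : ℂ) + (t : ℂ) - Complex.I * (δ : ℂ)))) *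
        (Complex.I * ((s : ℂ) + (t : ℂ) - Complex.I * (δ : ℂ))) ^ (-(3 / 2) : ℂ))
      (Set.Ioi 0) volume ∧
    (1 / (4 * (Real.pi : ℂ) ^ 2 * Complex.I * (r : ℂ))) *
        ∫ p : ℝ, (p : ℂ) * Complex.exp (-((δ : ℂ) + Complex.I * (t : ℂ)) * (p : ℂ) ^ 2
          + Complex.I * (r : ℂ) * (p : ℂ)) / ((p : ℂ) ^ 2 - z) =
      (Complex.I / ((8 * Real.pi ^ ((3 : ℝ) / 2) : ℝ) : ℂ)) *
        ∫ s in Set.Ioi (0 : ℝ),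
          Complex.exp (Complex.I * (s : ℂ) * z
              + Complex.I * (r : ℂ) ^ 2 / (4 * ((s : ℂ) + (t : ℂ) - Complex.I * (δ : ℂ)))) *
            (Complex.I * ((s : ℂ) + (t : ℂ) - Complex.I * (δ : ℂ))) ^ (-(3 / 2) : ℂ) := by
  refine ⟨integrable_greenFourierIntegrand z r t δ hδ him,
    integrableOn_greenTimeIntegrand z r t δ hr.ne' hδ him, ?_⟩
  have h := integral_greenFourierIntegrand z r t δ hδ him
  unfold greenFourierIntegrand greenTimeIntegrand at h
  rw [h, ← mul_assoc, green_prefactor_eq r hr.ne']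

/-- Regularized representation formula for the Green's function of
`(−Δ − z)^{-1} e^{itΔ}` on `ℝ³`: for `z ∈ ℂ` with `Re z > 0`, `Im z > 0` and
`r, t, δ > 0`, both integrals below converge absolutely and
`(1/(4π²ir)) ∫_ℝ p e^{-(δ+it)p² + irp}/(p²−z) dp
  = (i/(8π^{3/2})) ∫_0^∞ e^{isz + ir²/(4(s+t−iδ))} (i(s+t−iδ))^{-3/2} ds`,
with the principal branch of `w^{-3/2}`. -/
theorem stmt8 (z : ℂ) (hre : 0 < z.re) (him : 0 < z.im) (r t δ : ℝ)
    (hr : 0 < r) (ht : 0 < t) (hδ : 0 < δ) :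
    Integrable (fun p : ℝ =>
      (p : ℂ) * Complex.exp (-((δ : ℂ) + Complex.I * (t : ℂ)) * (p : ℂ) ^ 2
        + Complex.I * (r : ℂ) * (p : ℂ)) / ((p : ℂ) ^ 2 - z)) volume ∧
    IntegrableOn (fun s : ℝ =>
      Complex.exp (Complex.I * (s : ℂ) * z
          + Complex.I * (r : ℂ) ^ 2 / (4 * ((s : ℂ) + (t : ℂ) - Complex.I * (δ : ℂ)))) *
        (Complex.I * ((s : ℂ) + (t : ℂ) - Complex.I * (δ : ℂ))) ^ (-(3 / 2) : ℂ))
      (Set.Ioi 0) volume ∧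
    (1 / (4 * (Real.pi : ℂ) ^ 2 * Complex.I * (r : ℂ))) *
        ∫ p : ℝ, (p : ℂ) * Complex.exp (-((δ : ℂ) + Complex.I * (t : ℂ)) * (p : ℂ) ^ 2
          + Complex.I * (r : ℂ) * (p : ℂ)) / ((p : ℂ) ^ 2 - z) =
      (Complex.I / ((8 * Real.pi ^ ((3 : ℝ) / 2) : ℝ) : ℂ)) *
        ∫ s in Set.Ioi (0 : ℝ),
          Complex.exp (Complex.I * (s : ℂ) * z
              + Complex.I * (r : ℂ) ^ 2 / (4 * ((s : ℂ) + (t : ℂ) - Complex.I * (δ : ℂ)))) *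
            (Complex.I * ((s : ℂ) + (t : ℂ) - Complex.I * (δ : ℂ))) ^ (-(3 / 2) : ℂ) :=
  stmt8_general z him r t δ hr hδ
end

section
/- Let u⁺, u⁻ ∈ L²(ℝ³;ℂ) and set u = conj(u⁺) + conj(u⁻), v = conj(u⁺) − conj(u⁻), and Φ = (u, −iv) ∈ L²(ℝ³;ℂ²). Suppose c ∈ ℂ satisfies c·(σ₁ conj(Φ), Φ) = 1. For a scalar φ ∈ L²(ℝ³;ℂ) set [φ] = (Re φ, Im φ), P[φ] = c (σ₁ conj(Φ), [φ]) Φ + conj(c) (σ₁ Φ, [φ]) conj(Φ), and α = 2c (σ₁ conj(Φ), [φ]). Then: (i) α = −2c i [ (u⁺, φ) − (u⁻, conj(φ)) ]; (ii) P[φ] equals the componentwise real part of αΦ, i.e. P[φ] = ( Re(αu), Re(−iαv) ), and as a scalar function (first component plus i times second component) P[φ] corresponds to α·conj(u⁺) + conj(α)·u⁻; (iii) if moreover Φ and conj(Φ) are linearly independent over ℂ, then P[φ] = 0 if and only if (u⁺, φ) = (u⁻, conj(φ)); (iv) under the same independence hypothesis, with σ₃(f₁,f₂) = (f₁,−f₂)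 and P^♯[φ] = −c (σ₁σ₃ conj(Φ), [φ]) σ₃Φ − conj(c) (σ₁σ₃ Φ, [φ]) σ₃ conj(Φ), one has P^♯[φ] = 0 if and only if (u⁺, conj(φ)) = (u⁻, φ). -/
/-!
Since `[φ]` is real, `(σ₁Φ, [φ])` is the conjugate of `(σ₁ conj Φ, [φ])`, so
`P[φ] = aΦ + conj(a) conj Φ` with `a = c (σ₁ conj Φ, [φ])`: this is `2 Re(aΦ)` componentwise, and
when `Φ` and `conj Φ` are independent it vanishes exactly when `a = 0`. A pointwise computation
gives `(σ₁ conj Φ, [φ]) = -i[(u⁺, φ) - (u⁻, conj φ)]`. Finally `σ₃Φ` is `Φ` with `u⁺` and `u⁻`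
exchanged, so `P^♯[φ]` is `-P[φ]` for the exchanged pair and (iv) is (iii) for that pair.
-/

open MeasureTheory

noncomputable section

/-- The `L²(ℝ³;ℂ)` inner product `(f,g) = ∫ conj(f) g`, conjugate-linear in the first
argument. -/
def ip (f g : EuclideanSpace ℝ (Fin 3) → ℂ) : ℂ :=
  ∫ x, (starRingEnd ℂ) (f x) * g x

/-- The `L²(ℝ³;ℂ²)` inner product, the sum of the componentwise inner products. -/
def ip2 (f g : EuclideanSpace ℝ (Fin 3) → ℂ × ℂ) : ℂ :=
  ∫ x, ((starRingEnd ℂ) (f x).1 * (g x).1 + (starRingEnd ℂ) (f x).2 * (g x).2)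

/-- Componentwise complex conjugation. -/
def conj2 (f : EuclideanSpace ℝ (Fin 3) → ℂ × ℂ) : EuclideanSpace ℝ (Fin 3) → ℂ × ℂ :=
  fun x => ((starRingEnd ℂ) (f x).1, (starRingEnd ℂ) (f x).2)

/-- The Pauli matrix `σ₁`, swapping the two components. -/
def sig1 (f : EuclideanSpace ℝ (Fin 3) → ℂ × ℂ) : EuclideanSpace ℝ (Fin 3) → ℂ × ℂ :=
  fun x => ((f x).2, (f x).1)

/-- The Pauli matrix `σ₃`: `σ₃(f₁,f₂) = (f₁,−f₂)`. -/
def sig3 (f : EuclideanSpace ℝ (Fin 3) → ℂ × ℂ) : EuclideanSpace ℝ (Fin 3) → ℂ × ℂ :=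
  fun x => ((f x).1, -(f x).2)

/-- The real vector `[φ] = (Re φ, Im φ)` attached to a scalar `φ`. -/
def vecOf (φ : EuclideanSpace ℝ (Fin 3) → ℂ) : EuclideanSpace ℝ (Fin 3) → ℂ × ℂ :=
  fun x => (((φ x).re : ℂ), ((φ x).im : ℂ))

open ComplexConjugate

local notation "ℝ³" => EuclideanSpace ℝ (Fin 3)

lemma integrable_conj_mul {X : Type*} [MeasurableSpace X] {μ : Measure X} {f g : X → ℂ}
    (hf : MemLp f 2 μ) (hg : MemLp g 2 μ) : Integrable (fun x => conj (f x) * g x) μ :=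
  hf.star.integrable_mul hg

lemma ofReal_re_mul_add_I_mul_ofReal_re (α p q : ℂ) :
    (((α * (conj p + conj q)).re : ℝ) : ℂ)
      + Complex.I * (((-Complex.I * α * (conj p - conj q)).re : ℝ) : ℂ)
      = α * conj p + conj α * q := by
  rw [Complex.re_eq_add_conj, Complex.re_eq_add_conj]
  simp only [map_mul, map_add, map_sub, map_neg, Complex.conj_conj, Complex.conj_I]
  linear_combination (conj α * (p - q) - α * (conj p - conj q)) / 2 * Complex.I_sq

lemma sig3_conj2 (F : ℝ³ → ℂ × ℂ) : sig3 (conj2 F) = conj2 (sig3 F) := by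
  funext x; simp [sig3, conj2]

def spinor (up um : ℝ³ → ℂ) : ℝ³ → ℂ × ℂ :=
  fun x => (conj (up x) + conj (um x), -Complex.I * (conj (up x) - conj (um x)))

lemma sig3_spinor (up um : ℝ³ → ℂ) : sig3 (spinor up um) = spinor um up := by
  funext x; simp only [sig3, spinor, Prod.mk.injEq]; constructor <;> ring

lemma ip2_sig1_conj2_spinor_vecOf {up um φ : ℝ³ → ℂ} (hup : MemLp up 2 volume)
    (hum : MemLp um 2 volume) (hφ : MemLp φ 2 volume) :
    ip2 (sig1 (conj2 (spinor up um))) (vecOf φ)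
      = -Complex.I * (ip up φ - ip um (fun x => conj (φ x))) := by
  have hpointwise : ∀ x, conj (sig1 (conj2 (spinor up um)) x).1 * (vecOf φ x).1
      + conj (sig1 (conj2 (spinor up um)) x).2 * (vecOf φ x).2
      = -Complex.I * (conj (up x) * φ x - conj (um x) * conj (φ x)) := by
    intro x
    apply Complex.ext <;> simp [sig1, conj2, spinor, vecOf] <;> ring
  simp only [ip2, hpointwise, ip]
  have hφc : MemLp (fun x => conj (φ x)) 2 volume := hφ.star
  rw [integral_const_mul, integral_sub (integrable_conj_mul hup hφ) (integrable_conj_mul hum hφc)]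

lemma ip2_sig1_vecOf_eq_conj (F : ℝ³ → ℂ × ℂ) (φ : ℝ³ → ℂ) :
    ip2 (sig1 F) (vecOf φ) = conj (ip2 (sig1 (conj2 F)) (vecOf φ)) := by
  simp only [ip2, ← integral_conj]
  congr 1; funext x
  simp [sig1, conj2, vecOf]

def proj (c : ℂ) (Φ : ℝ³ → ℂ × ℂ) (φ : ℝ³ → ℂ) : ℝ³ → ℂ × ℂ :=
  fun x => (c * ip2 (sig1 (conj2 Φ)) (vecOf φ)) • Φ x
    + (conj c * ip2 (sig1 Φ) (vecOf φ)) • conj2 Φ x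

lemma proj_eq (c : ℂ) (Φ : ℝ³ → ℂ × ℂ) (φ : ℝ³ → ℂ) :
    proj c Φ φ = (c * ip2 (sig1 (conj2 Φ)) (vecOf φ)) • Φ
      + conj (c * ip2 (sig1 (conj2 Φ)) (vecOf φ)) • conj2 Φ := by
  funext x
  simp [proj, ip2_sig1_vecOf_eq_conj Φ φ]

lemma proj_apply (c : ℂ) (Φ : ℝ³ → ℂ × ℂ) (φ : ℝ³ → ℂ) (x : ℝ³) :
    proj c Φ φ x = ((((2 * c * ip2 (sig1 (conj2 Φ)) (vecOf φ) * (Φ x).1).re : ℝ) : ℂ),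
      (((2 * c * ip2 (sig1 (conj2 Φ)) (vecOf φ) * (Φ x).2).re : ℝ) : ℂ)) := by
  rw [proj_eq]
  refine Prod.ext ?_ ?_ <;>
  · simp only [Pi.add_apply, Pi.smul_apply, conj2, Prod.fst_add, Prod.snd_add, Prod.smul_fst,
      Prod.smul_snd, smul_eq_mul, Complex.re_eq_add_conj, map_mul, map_ofNat]
    ring

lemma linearIndependent_sig3 {F : ℝ³ → ℂ × ℂ} (h : LinearIndependent ℂ ![F, conj2 F]) :
    LinearIndependent ℂ ![sig3 F, conj2 (sig3 F)] := by
  refine LinearIndependent.pair_iff.2 fun s t hst => LinearIndependent.pair_iff.1 h s t ?_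
  funext x
  have hx := congr_fun hst x
  simp only [Prod.ext_iff, sig3, conj2, Pi.add_apply, Pi.smul_apply, Prod.fst_add, Prod.snd_add,
    Prod.smul_fst, Prod.smul_snd, smul_eq_mul, map_neg, Pi.zero_apply, Prod.fst_zero,
    Prod.snd_zero] at hx ⊢
  exact ⟨hx.1, by linear_combination -hx.2⟩

lemma proj_eq_zero_iff {c : ℂ} (hc : c ≠ 0) {Φ : ℝ³ → ℂ × ℂ}
    (hΦ : LinearIndependent ℂ ![Φ, conj2 Φ]) (φ : ℝ³ → ℂ) :
    proj c Φ φ = 0 ↔ ip2 (sig1 (conj2 Φ)) (vecOf φ) = 0 := by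
  constructor
  · intro h
    rw [proj_eq] at h
    simpa [hc] using (LinearIndependent.pair_iff.1 hΦ _ _ h).1
  · intro h
    simp [proj_eq, h]

lemma proj_spinor_eq_zero_iff {up um φ : ℝ³ → ℂ} (hup : MemLp up 2 volume)
    (hum : MemLp um 2 volume) (hφ : MemLp φ 2 volume) {c : ℂ} (hc : c ≠ 0)
    (hΦ : LinearIndependent ℂ ![spinor up um, conj2 (spinor up um)]) :
    proj c (spinor up um) φ = 0 ↔ ip up φ = ip um (fun x => conj (φ x)) := by
  rw [proj_eq_zero_iff hc hΦ, ip2_sig1_conj2_spinor_vecOf hup hum hφ]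
  simp [sub_eq_zero, Complex.I_ne_zero]

/-- Lemma 2.6 (projection formulas onto the eigenspaces of the linearized operator):
with `u = conj(u⁺)+conj(u⁻)`, `v = conj(u⁺)−conj(u⁻)`, `Φ = (u,−iv)`,
`c (σ₁ conj Φ, Φ) = 1`, `α = 2c(σ₁ conj Φ, [φ])` and
`P[φ] = c(σ₁ conj Φ,[φ])Φ + conj(c)(σ₁Φ,[φ])conj(Φ)`:
(i) `α = −2ci[(u⁺,φ) − (u⁻,conj φ)]`;
(ii) `P[φ] = (Re(αu), Re(−iαv))`, and as a scalar `P[φ] = α conj(u⁺) + conj(α) u⁻`;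
(iii) if `Φ, conj Φ` are linearly independent over `ℂ` then
`P[φ] = 0 ↔ (u⁺,φ) = (u⁻,conj φ)`;
(iv) likewise `P^♯[φ] = 0 ↔ (u⁺,conj φ) = (u⁻,φ)`. -/
theorem stmt11 (up um φ : EuclideanSpace ℝ (Fin 3) → ℂ)
    (hup : MemLp up 2 volume) (hum : MemLp um 2 volume) (hφ : MemLp φ 2 volume)
    (u v : EuclideanSpace ℝ (Fin 3) → ℂ)
    (hu : ∀ x, u x = (starRingEnd ℂ) (up x) + (starRingEnd ℂ) (um x))
    (hv : ∀ x, v x = (starRingEnd ℂ) (up x) - (starRingEnd ℂ) (um x))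
    (Φ : EuclideanSpace ℝ (Fin 3) → ℂ × ℂ)
    (hΦ : ∀ x, Φ x = (u x, -Complex.I * v x))
    (c : ℂ) (hc : c * ip2 (sig1 (conj2 Φ)) Φ = 1)
    (α : ℂ) (hα : α = 2 * c * ip2 (sig1 (conj2 Φ)) (vecOf φ))
    (P : EuclideanSpace ℝ (Fin 3) → ℂ × ℂ)
    (hP : ∀ x, P x = (c * ip2 (sig1 (conj2 Φ)) (vecOf φ)) • Φ x
      + ((starRingEnd ℂ) c * ip2 (sig1 Φ) (vecOf φ)) • conj2 Φ x)
    (Psharp : EuclideanSpace ℝ (Fin 3) → ℂ × ℂ)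
    (hPsharp : ∀ x, Psharp x =
      (-(c * ip2 (sig1 (sig3 (conj2 Φ))) (vecOf φ))) • sig3 Φ x
        + (-((starRingEnd ℂ) c * ip2 (sig1 (sig3 Φ)) (vecOf φ))) • sig3 (conj2 Φ) x) :
    -- (i)
    (α = -2 * c * Complex.I *
        (ip up φ - ip um (fun x => (starRingEnd ℂ) (φ x)))) ∧
    -- (ii) componentwise real part of `αΦ`
    (∀ x, P x = ((((α * u x).re : ℝ) : ℂ), (((-Complex.I * α * v x).re : ℝ) : ℂ))) ∧
    -- (ii) as a scalar function
    (∀ x, (P x).1 + Complex.I * (P x).2 =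
        α * (starRingEnd ℂ) (up x) + (starRingEnd ℂ) α * um x) ∧
    -- (iii)
    (LinearIndependent ℂ ![Φ, conj2 Φ] →
      ((∀ x, P x = 0) ↔ ip up φ = ip um (fun x => (starRingEnd ℂ) (φ x)))) ∧
    -- (iv)
    (LinearIndependent ℂ ![Φ, conj2 Φ] →
      ((∀ x, Psharp x = 0) ↔ ip up (fun x => (starRingEnd ℂ) (φ x)) = ip um φ)) := by
  have hspinor : Φ = spinor up um := funext fun x => by rw [hΦ, hu, hv]; rfl
  subst hspinor
  have hc0 : c ≠ 0 := left_ne_zero_of_mul_eq_one hc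
  have hP' : P = proj c (spinor up um) φ := funext hP
  have hPsharp' : Psharp = -proj c (spinor um up) φ := by
    funext x
    rw [hPsharp x, sig3_conj2, sig3_spinor]
    simp only [proj, Pi.neg_apply, neg_smul, neg_add]
  have hreal : ∀ x, P x = ((((α * u x).re : ℝ) : ℂ), (((-Complex.I * α * v x).re : ℝ) : ℂ)) := by
    intro x
    rw [hP', proj_apply, ← hα, hΦ x]
    refine Prod.ext rfl ?_
    dsimp only
    ring_nf
  refine ⟨?_, hreal, fun x => ?_, fun hli => ?_, fun hli => ?_⟩
  · rw [hα, ip2_sig1_conj2_spinor_vecOf hup hum hφ]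
    ring
  · rw [hreal x, hu x, hv x]
    exact ofReal_re_mul_add_I_mul_ofReal_re α (up x) (um x)
  · rw [← proj_spinor_eq_zero_iff hup hum hφ hc0 hli, hP', funext_iff]
    rfl
  · have hli' := linearIndependent_sig3 hli
    rw [sig3_spinor] at hli'
    rw [eq_comm, ← proj_spinor_eq_zero_iff hum hup hφ hc0 hli', hPsharp']
    simp only [funext_iff, Pi.neg_apply, neg_eq_zero, Pi.zero_apply]

end
end

section
/- Let u⁺, u⁻ ∈ L²(ℝ³;ℂ) and let Φ = conj(u⁺)·(1, −i) + conj(u⁻)·(1, i) ∈ L²(ℝ³;ℂ²), and let J(f₁,f₂) = (f₂, −f₁). Then: (i) JΦ = iΦ − 2i·(1,−i)·conj(u⁺) and JΦ = −iΦ + 2i·(1,i)·conj(u⁻); (ii) if f ∈ L²(ℝ³;ℂ²) satisfies (σ₁ conj(Φ), f) = 0 and (σ₁ Φ, f) = 0, then (σ₁ conj(Φ), J f) = ( 2i·(i,1)·u⁺ , f ) and (σ₁ Φ, J f) = ( 2i·(i,−1)·conj(u⁺) , f ). -/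
open MeasureTheory

noncomputable section

/-- The symplectic matrix `J(f₁,f₂) = (f₂,−f₁)`. -/
def Jmat (f : EuclideanSpace ℝ (Fin 3) → ℂ × ℂ) : EuclideanSpace ℝ (Fin 3) → ℂ × ℂ :=
  fun x => ((f x).2, -(f x).1)

/-! Since `J` is skew-adjoint, anticommutes with `σ₁` and commutes with conjugation,
`(σ₁ conj Φ, J f) = (σ₁ conj (J Φ), f)` and `(σ₁ Φ, J f) = (σ₁ (J Φ), f)`. Part (i) writes
`σ₁ conj (J Φ)` as `2i(i,1)u⁺ − i σ₁ conj Φ` and `σ₁ (J Φ)` as `2i(i,−1)conj(u⁺) + i σ₁ Φ`, and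
the orthogonality of `f` to `σ₁ conj Φ` and `σ₁ Φ` removes the second terms. -/

theorem MeasureTheory.MemLp.integrable_conj_fst_mul_add_conj_snd_mul {α : Type*}
    [MeasurableSpace α] {μ : Measure α} {g f : α → ℂ × ℂ} (hg : MemLp g 2 μ)
    (hf : MemLp f 2 μ) :
    Integrable
      (fun x => (starRingEnd ℂ) (g x).1 * (f x).1 + (starRingEnd ℂ) (g x).2 * (f x).2) μ :=
  (hg.fst.star.integrable_mul hf.fst).add (hg.snd.star.integrable_mul hf.snd)

theorem ip2_Jmat_right (g f : EuclideanSpace ℝ (Fin 3) → ℂ × ℂ) :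
    ip2 g (Jmat f) = ip2 (-Jmat g) f := by
  rw [ip2, ip2]
  congr 1 with x
  simp only [Jmat, Pi.neg_apply, Prod.fst_neg, Prod.snd_neg, map_neg, neg_neg]
  ring

theorem neg_Jmat_sig1 (f : EuclideanSpace ℝ (Fin 3) → ℂ × ℂ) :
    -Jmat (sig1 f) = sig1 (Jmat f) := by
  ext x <;> simp [Jmat, sig1]

theorem conj2_Jmat (f : EuclideanSpace ℝ (Fin 3) → ℂ × ℂ) :
    conj2 (Jmat f) = Jmat (conj2 f) := by
  ext x <;> simp [Jmat, conj2]

section L2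

variable {p : ENNReal} {g h f : EuclideanSpace ℝ (Fin 3) → ℂ × ℂ}

theorem MeasureTheory.MemLp.sig1 (hf : MemLp f p volume) : MemLp (sig1 f) p volume :=
  MemLp.of_fst_snd ⟨hf.snd, hf.fst⟩

theorem MeasureTheory.MemLp.conj2 (hf : MemLp f p volume) : MemLp (conj2 f) p volume :=
  MemLp.of_fst_snd ⟨hf.fst.star, hf.snd.star⟩

theorem ip2_add_smul_left (hg : MemLp g 2 volume) (hh : MemLp h 2 volume)
    (hf : MemLp f 2 volume) (c : ℂ) :
    ip2 (g + c • h) f = ip2 g f + (starRingEnd ℂ) c * ip2 h f := by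
  rw [ip2, ip2, ip2, ← integral_const_mul,
    ← integral_add (hg.integrable_conj_fst_mul_add_conj_snd_mul hf)
      ((hh.integrable_conj_fst_mul_add_conj_snd_mul hf).const_mul _)]
  congr 1 with x
  simp only [Pi.add_apply, Pi.smul_apply, Prod.fst_add, Prod.snd_add, Prod.smul_fst,
    Prod.smul_snd, smul_eq_mul, map_add, map_mul]
  ring

theorem ip2_Jmat_right_eq_of_orthogonal (hg : MemLp g 2 volume) (hh : MemLp h 2 volume)
    (hf : MemLp f 2 volume) {c : ℂ} (hJg : -Jmat g = h + c • g) (hgf : ip2 g f = 0) :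
    ip2 g (Jmat f) = ip2 h f := by
  rw [ip2_Jmat_right, hJg, ip2_add_smul_left hh hg hf, hgf, mul_zero, add_zero]

end L2

/-- Lemma 2.7: with `Φ = conj(u⁺)(1,−i) + conj(u⁻)(1,i)`:
(i) `JΦ = iΦ − 2i(1,−i)conj(u⁺)` and `JΦ = −iΦ + 2i(1,i)conj(u⁻)`;
(ii) if `(σ₁ conj(Φ), f) = 0 = (σ₁ Φ, f)` then
`(σ₁ conj(Φ), J f) = (2i(i,1)u⁺, f)` and `(σ₁ Φ, J f) = (2i(i,−1)conj(u⁺), f)`. -/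
theorem stmt12 (up um : EuclideanSpace ℝ (Fin 3) → ℂ)
    (hup : MemLp up 2 volume) (hum : MemLp um 2 volume)
    (Φ : EuclideanSpace ℝ (Fin 3) → ℂ × ℂ)
    (hΦ : ∀ x, Φ x = ((starRingEnd ℂ) (up x) + (starRingEnd ℂ) (um x),
      -Complex.I * (starRingEnd ℂ) (up x) + Complex.I * (starRingEnd ℂ) (um x))) :
    (∀ x, Jmat Φ x =
        Complex.I • Φ x
          - (2 * Complex.I) • ((starRingEnd ℂ) (up x), -Complex.I * (starRingEnd ℂ) (up x))) ∧
    (∀ x, Jmat Φ x =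
        (-Complex.I) • Φ x
          + (2 * Complex.I) • ((starRingEnd ℂ) (um x), Complex.I * (starRingEnd ℂ) (um x))) ∧
    (∀ f : EuclideanSpace ℝ (Fin 3) → ℂ × ℂ, MemLp f 2 volume →
      ip2 (sig1 (conj2 Φ)) f = 0 → ip2 (sig1 Φ) f = 0 →
        ip2 (sig1 (conj2 Φ)) (Jmat f) =
          ip2 (fun x => (2 * Complex.I * (Complex.I * up x), 2 * Complex.I * up x)) f ∧
        ip2 (sig1 Φ) (Jmat f) =
          ip2 (fun x => (2 * Complex.I * (Complex.I * (starRingEnd ℂ) (up x)),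
            2 * Complex.I * (-(starRingEnd ℂ) (up x)))) f) := by
  have hJΦ_up : ∀ x, Jmat Φ x = Complex.I • Φ x
      - (2 * Complex.I) • ((starRingEnd ℂ) (up x), -Complex.I * (starRingEnd ℂ) (up x)) := by
    intro x
    simp only [Jmat, hΦ x, Prod.smul_mk, Prod.mk_sub_mk, smul_eq_mul, Prod.mk.injEq]
    exact ⟨by ring,
      by linear_combination (-(starRingEnd ℂ) (up x) - (starRingEnd ℂ) (um x)) * Complex.I_mul_I⟩
  have hΦ_L2 : MemLp Φ 2 volume := by
    rw [show Φ = _ from funext hΦ]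
    exact .of_fst_snd ⟨hup.star.add hum.star, (hup.star.const_mul _).add (hum.star.const_mul _)⟩
  refine ⟨hJΦ_up, fun x => ?_, fun f hf hΦf_conj hΦf => ⟨?_, ?_⟩⟩
  · simp only [Jmat, hΦ x, Prod.smul_mk, Prod.mk_add_mk, smul_eq_mul, Prod.mk.injEq]
    exact ⟨by ring,
      by linear_combination (-(starRingEnd ℂ) (up x) - (starRingEnd ℂ) (um x)) * Complex.I_mul_I⟩
  · refine ip2_Jmat_right_eq_of_orthogonal hΦ_L2.conj2.sig1
      (.of_fst_snd ⟨(hup.const_mul _).const_mul _, hup.const_mul _⟩) hf (c := -Complex.I)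
      ?_ hΦf_conj
    rw [neg_Jmat_sig1, ← conj2_Jmat]
    ext x <;> simp only [sig1, conj2, hJΦ_up x, Pi.add_apply, Pi.smul_apply, Prod.fst_add,
      Prod.snd_add, Prod.fst_sub, Prod.snd_sub, Prod.smul_fst, Prod.smul_snd, smul_eq_mul,
      map_sub, map_mul, map_neg, map_ofNat, Complex.conj_I, Complex.conj_conj] <;> ring
  · refine ip2_Jmat_right_eq_of_orthogonal hΦ_L2.sig1
      (.of_fst_snd ⟨(hup.star.const_mul _).const_mul _, hup.star.neg.const_mul _⟩) hf
      (c := Complex.I) ?_ hΦf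
    rw [neg_Jmat_sig1]
    ext x <;> simp only [sig1, hJΦ_up x, Pi.add_apply, Pi.smul_apply, Prod.fst_add,
      Prod.snd_add, Prod.fst_sub, Prod.snd_sub, Prod.smul_fst, Prod.smul_snd, smul_eq_mul] <;> ring

end
end

section
/- For all real numbers α, σ with 0 < α < σ < 1 there exists a constant C = C(α,σ) such that for every T > 0 and every t > 0: ∫_0^t (t−s)^{-σ} (T+s)^{-1} ds ≤ C · T^{-α} · (T+t)^{α−σ}. -/
open MeasureTheory

lemma aux_integrable (σ T t a b : ℝ) (hσ : σ < 1) (hT : 0 < T) (ha : 0 ≤ a) (hb : 0 ≤ b) :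
    IntervalIntegrable (fun s : ℝ => (t - s) ^ (-σ) * (T + s)⁻¹) volume a b := by
  have h1 : IntervalIntegrable (fun s : ℝ => (t - s) ^ (-σ)) volume a b := by
    have h := (intervalIntegral.intervalIntegrable_rpow' (a := t - a) (b := t - b)
      (show (-1:ℝ) < -σ by linarith)).comp_sub_left t
    simpa using h
  refine h1.mul_continuousOn ?_
  refine ContinuousOn.inv₀ (by fun_prop) ?_
  intro x hx
  have : min a b ≤ x := (Set.uIcc_subset_Icc (Set.mem_Icc.2 ⟨min_le_left a b, le_max_left a b⟩)
    (Set.mem_Icc.2 ⟨min_le_right a b, le_max_right a b⟩) hx).1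
  have : 0 ≤ x := le_trans (le_min ha hb) this
  positivity

lemma aux_int_rpow_sub (σ t a b : ℝ) (hσ : σ < 1) :
    ∫ s in a..b, (t - s) ^ (-σ) = ((t - a) ^ (1 - σ) - (t - b) ^ (1 - σ)) / (1 - σ) := by
  have h := intervalIntegral.integral_comp_sub_left (a := a) (b := b) (fun x : ℝ => x ^ (-σ)) t
  rw [h, integral_rpow (Or.inl (by linarith))]
  ring_nf

lemma aux_int_rpow_add (β T a b : ℝ) (hβ : -1 < β) :
    ∫ s in a..b, (T + s) ^ β = ((T + b) ^ (β + 1) - (T + a) ^ (β + 1)) / (β + 1) := by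
  have h := intervalIntegral.integral_comp_add_left (a := a) (b := b) (fun x : ℝ => x ^ β) T
  rw [h, integral_rpow (Or.inl hβ)]

/-- Convolution integral estimate (4.28): for `0 < α < σ < 1` there is `C` such that
for all `T, t > 0`, `∫_0^t (t−s)^{-σ}(T+s)^{-1} ds ≤ C T^{-α} (T+t)^{α−σ}`. -/
theorem stmt13 (α σ : ℝ) (hα : 0 < α) (hασ : α < σ) (hσ : σ < 1) :
    ∃ C : ℝ, 0 < C ∧ ∀ T : ℝ, 0 < T → ∀ t : ℝ, 0 < t →
      ∫ s in (0 : ℝ)..t, (t - s) ^ (-σ) * (T + s)⁻¹ ≤ C * T ^ (-α) * (T + t) ^ (α - σ) := by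
  have hσ0 : 0 < σ := hα.trans hασ
  have h1σ : (0:ℝ) < 1 - σ := by linarith
  refine ⟨2 ^ (2*σ) / α + 2 / (1-σ) + 2 ^ (σ-α) / (1-σ), by positivity, ?_⟩
  intro T hT t ht
  have hTt : 0 < T + t := by linarith
  have hTα : 0 < T ^ (-α) := Real.rpow_pos_of_pos hT _
  have hTtσ : 0 < (T + t) ^ (α - σ) := Real.rpow_pos_of_pos hTt _
  rcases le_or_gt t T with htT | htT
  · -- case t ≤ T : bound (T+s)⁻¹ ≤ T⁻¹
    have hmono : ∫ s in (0:ℝ)..t, (t - s) ^ (-σ) * (T + s)⁻¹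
        ≤ ∫ s in (0:ℝ)..t, (t - s) ^ (-σ) * T⁻¹ := by
      refine intervalIntegral.integral_mono_on ht.le
        (aux_integrable σ T t 0 t hσ hT le_rfl ht.le)
        (((intervalIntegral.intervalIntegrable_rpow' (a := t) (b := 0)
          (show (-1:ℝ) < -σ by linarith)).comp_sub_left t).symm.mul_const _ |>.mono_set
          (by rw [Set.uIcc_comm]; apply Set.uIcc_subset_uIcc <;> simp)) ?_
      intro x hx
      have hx0 : 0 ≤ x := hx.1
      have h1 : (T + x)⁻¹ ≤ T⁻¹ := by
        apply inv_anti₀ hT; linarith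
      have h2 : 0 ≤ (t - x) ^ (-σ) := Real.rpow_nonneg (by linarith [hx.2]) _
      exact mul_le_mul_of_nonneg_left h1 h2
    have hval : ∫ s in (0:ℝ)..t, (t - s) ^ (-σ) * T⁻¹ = t ^ (1-σ) / (1-σ) * T⁻¹ := by
      rw [intervalIntegral.integral_mul_const, aux_int_rpow_sub σ t 0 t hσ]
      rw [sub_zero, sub_self, Real.zero_rpow (by linarith)]
      ring
    refine hmono.trans (hval.le.trans ?_)
    -- t^{1-σ}/(1-σ) * T⁻¹ ≤ 2^{σ-α}/(1-σ) * T^{-α} (T+t)^{α-σ}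
    have key : t ^ (1-σ) * T⁻¹ ≤ 2 ^ (σ-α) * (T ^ (-α) * (T + t) ^ (α - σ)) := by
      have e1 : t ^ (1-σ) ≤ T ^ (1-σ) :=
        Real.rpow_le_rpow ht.le htT (by linarith)
      have e2 : T ^ (α - σ) ≤ 2 ^ (σ-α) * (T + t) ^ (α - σ) := by
        have : (T + t) / 2 ≤ T := by linarith
        have h3 : ((T + t) / 2) ^ (α - σ) = 2 ^ (σ-α) * (T + t) ^ (α - σ) := by
          rw [Real.div_rpow hTt.le (by norm_num), div_eq_mul_inv,
            ← Real.rpow_neg (by norm_num), neg_sub]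
          ring
        calc T ^ (α - σ) ≤ ((T + t) / 2) ^ (α - σ) :=
              Real.rpow_le_rpow_of_nonpos (by linarith) this (by linarith)
          _ = _ := h3
      calc t ^ (1-σ) * T⁻¹ ≤ T ^ (1-σ) * T⁻¹ := by
            apply mul_le_mul_of_nonneg_right e1 (by positivity)
        _ = T ^ (-α) * T ^ (α - σ) := by
            rw [← Real.rpow_neg_one T, ← Real.rpow_add hT, ← Real.rpow_add hT]
            congr 1; ring
        _ ≤ T ^ (-α) * (2 ^ (σ-α) * (T + t) ^ (α - σ)) :=
            mul_le_mul_of_nonneg_left e2 hTα.le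
        _ = 2 ^ (σ-α) * (T ^ (-α) * (T + t) ^ (α - σ)) := by ring
    calc t ^ (1-σ) / (1-σ) * T⁻¹ = (t ^ (1-σ) * T⁻¹) / (1-σ) := by ring
      _ ≤ (2 ^ (σ-α) * (T ^ (-α) * (T + t) ^ (α - σ))) / (1-σ) := by
          apply div_le_div_of_nonneg_right ?_ h1σ.le
          exact key
      _ = 2 ^ (σ-α) / (1-σ) * T ^ (-α) * (T + t) ^ (α - σ) := by ring
      _ ≤ _ := by
          have : (0:ℝ) ≤ 2 ^ (2*σ) / α + 2 / (1-σ) := by positivity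
          nlinarith [mul_pos hTα hTtσ]
  · -- case T < t : split at t/2
    have ht2 : 0 < t / 2 := half_pos ht
    have hTt2 : 0 < T + t / 2 := by linarith
    have hsplit : ∫ s in (0:ℝ)..t, (t - s) ^ (-σ) * (T + s)⁻¹
        = (∫ s in (0:ℝ)..t/2, (t - s) ^ (-σ) * (T + s)⁻¹)
          + ∫ s in (t/2)..t, (t - s) ^ (-σ) * (T + s)⁻¹ :=
      (intervalIntegral.integral_add_adjacent_intervals
        (aux_integrable σ T t 0 (t/2) hσ hT le_rfl ht2.le)
        (aux_integrable σ T t (t/2) t hσ hT ht2.le ht.le)).symm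
    -- Part A
    have hintA : IntervalIntegrable (fun s : ℝ => (t/2) ^ (-σ) * (T ^ (-α) * (T + s) ^ (α-1)))
        volume 0 (t/2) := by
      have h := (intervalIntegral.intervalIntegrable_rpow' (a := T + 0) (b := T + t/2)
        (show (-1:ℝ) < α - 1 by linarith)).comp_add_left T
      simpa using (h.const_mul (T ^ (-α))).const_mul ((t/2) ^ (-σ))
    have hA : (∫ s in (0:ℝ)..t/2, (t - s) ^ (-σ) * (T + s)⁻¹)
        ≤ ∫ s in (0:ℝ)..t/2, (t/2) ^ (-σ) * (T ^ (-α) * (T + s) ^ (α-1)) := by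
      refine intervalIntegral.integral_mono_on ht2.le
        (aux_integrable σ T t 0 (t/2) hσ hT le_rfl ht2.le) hintA ?_
      intro x hx
      have hx0 : 0 ≤ x := hx.1
      have hx2 : x ≤ t/2 := hx.2
      have hTx : 0 < T + x := by linarith
      have e1 : (t - x) ^ (-σ) ≤ (t/2) ^ (-σ) :=
        Real.rpow_le_rpow_of_nonpos ht2 (by linarith) (by linarith)
      have e2 : (T + x)⁻¹ = (T + x) ^ (-α) * (T + x) ^ (α - 1) := by
        rw [← Real.rpow_neg_one, ← Real.rpow_add hTx]; congr 1; ring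
      have e3 : (T + x) ^ (-α) ≤ T ^ (-α) :=
        Real.rpow_le_rpow_of_nonpos hT (by linarith) (by linarith)
      have e4 : (T + x)⁻¹ ≤ T ^ (-α) * (T + x) ^ (α - 1) := by
        rw [e2]
        exact mul_le_mul_of_nonneg_right e3 (Real.rpow_nonneg hTx.le _)
      exact mul_le_mul e1 e4 (by positivity) (by positivity)
    have hAval : (∫ s in (0:ℝ)..t/2, (t/2) ^ (-σ) * (T ^ (-α) * (T + s) ^ (α-1)))
        = (t/2) ^ (-σ) * T ^ (-α) * (((T + t/2) ^ α - (T + 0) ^ α) / α) := by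
      rw [intervalIntegral.integral_const_mul, intervalIntegral.integral_const_mul,
        aux_int_rpow_add (α-1) T 0 (t/2) (by linarith)]
      rw [show α - 1 + 1 = α by ring]
      ring
    have hAbound : (t/2) ^ (-σ) * T ^ (-α) * (((T + t/2) ^ α - (T + 0) ^ α) / α)
        ≤ 2 ^ (2*σ) / α * (T ^ (-α) * (T + t) ^ (α - σ)) := by
      have h44 : (2:ℝ) ^ (2*σ) = 4 ^ σ := by
        have h2 : ((2:ℝ) ^ (2:ℝ)) = 4 := by
          rw [show (2:ℝ) = ((2:ℕ):ℝ) by norm_num, Real.rpow_natCast]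
          norm_num
        rw [← h2, ← Real.rpow_mul (by norm_num)]
      have k1 : (t/2) ^ (-σ) ≤ 2 ^ (2*σ) * (T + t) ^ (-σ) := by
        have h4 : (T + t) / 4 ≤ t / 2 := by linarith
        calc (t/2) ^ (-σ) ≤ ((T+t)/4) ^ (-σ) :=
              Real.rpow_le_rpow_of_nonpos (by linarith) h4 (by linarith)
          _ = (T+t) ^ (-σ) * (4:ℝ) ^ σ := by
              rw [Real.div_rpow hTt.le (by norm_num), div_eq_mul_inv,
                ← Real.rpow_neg (by norm_num), neg_neg]
          _ = 2 ^ (2*σ) * (T + t) ^ (-σ) := by rw [← h44]; ring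
      have k2 : ((T + t/2) ^ α - (T + 0) ^ α) / α ≤ (T + t) ^ α / α := by
        apply div_le_div_of_nonneg_right ?_ hα.le
        have : (T + t/2) ^ α ≤ (T + t) ^ α :=
          Real.rpow_le_rpow hTt2.le (by linarith) hα.le
        have := Real.rpow_nonneg (by linarith : (0:ℝ) ≤ T + 0) α
        linarith
      have k3 : 0 ≤ ((T + t/2) ^ α - (T + 0) ^ α) / α := by
        apply div_nonneg ?_ hα.le
        have : (T + 0) ^ α ≤ (T + t/2) ^ α :=
          Real.rpow_le_rpow (by linarith) (by linarith) hα.le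
        linarith
      calc (t/2) ^ (-σ) * T ^ (-α) * (((T + t/2) ^ α - (T + 0) ^ α) / α) ≤ (2 ^ (2*σ) * (T + t) ^ (-σ)) * T ^ (-α) * ((T + t) ^ α / α) := by
            apply mul_le_mul ?_ k2 k3 (by positivity)
            exact mul_le_mul_of_nonneg_right k1 hTα.le
        _ = 2 ^ (2*σ) / α * (T ^ (-α) * ((T + t) ^ (-σ) * (T + t) ^ α)) := by ring
        _ = 2 ^ (2*σ) / α * (T ^ (-α) * (T + t) ^ (α - σ)) := by
            rw [← Real.rpow_add hTt, show -σ + α = α - σ by ring]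
    -- Part B
    have hintB : IntervalIntegrable (fun s : ℝ => (t - s) ^ (-σ) * (T + t/2)⁻¹)
        volume (t/2) t := by
      have h := (intervalIntegral.intervalIntegrable_rpow' (a := t - (t/2)) (b := t - t)
        (show (-1:ℝ) < -σ by linarith)).comp_sub_left t
      refine (h.mul_const _).mono_set ?_
      apply Set.uIcc_subset_uIcc <;> simp
    have hB : (∫ s in (t/2)..t, (t - s) ^ (-σ) * (T + s)⁻¹)
        ≤ ∫ s in (t/2)..t, (t - s) ^ (-σ) * (T + t/2)⁻¹ := by
      refine intervalIntegral.integral_mono_on (by linarith)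
        (aux_integrable σ T t (t/2) t hσ hT ht2.le ht.le) hintB ?_
      intro x hx
      have e1 : (T + x)⁻¹ ≤ (T + t/2)⁻¹ := inv_anti₀ hTt2 (by linarith [hx.1])
      exact mul_le_mul_of_nonneg_left e1 (Real.rpow_nonneg (by linarith [hx.2]) _)
    have hBval : (∫ s in (t/2)..t, (t - s) ^ (-σ) * (T + t/2)⁻¹)
        = (t/2) ^ (1-σ) / (1-σ) * (T + t/2)⁻¹ := by
      rw [intervalIntegral.integral_mul_const, aux_int_rpow_sub σ t (t/2) t hσ]
      rw [sub_self, Real.zero_rpow (by linarith), show t - t/2 = t/2 by ring]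
      ring
    have hBbound : (t/2) ^ (1-σ) / (1-σ) * (T + t/2)⁻¹
        ≤ 2 / (1-σ) * (T ^ (-α) * (T + t) ^ (α - σ)) := by
      have k1 : (t/2) ^ (1-σ) ≤ (T + t) ^ (1-σ) :=
        Real.rpow_le_rpow ht2.le (by linarith) (by linarith)
      have k2 : (T + t/2)⁻¹ ≤ 2 * (T + t)⁻¹ := by
        have h1 : (T + t/2)⁻¹ ≤ ((T + t)/2)⁻¹ := inv_anti₀ (by linarith) (by linarith)
        rw [show ((T + t)/2)⁻¹ = 2 * (T + t)⁻¹ by field_simp] at h1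
        exact h1
      have k3 : (T + t) ^ (1-σ) * (2 * (T + t)⁻¹) = 2 * (T + t) ^ (-σ) := by
        rw [show (T + t) ^ (1-σ) * (2 * (T + t)⁻¹) = 2 * ((T + t) ^ (1-σ) * (T + t) ^ (-1:ℝ)) by
          rw [Real.rpow_neg_one]; ring, ← Real.rpow_add hTt, show 1 - σ + (-1:ℝ) = -σ by ring]
      have k4 : (T + t) ^ (-σ) = (T + t) ^ (-α) * (T + t) ^ (α - σ) := by
        rw [← Real.rpow_add hTt]; congr 1; ring
      have k5 : (T + t) ^ (-α) ≤ T ^ (-α) :=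
        Real.rpow_le_rpow_of_nonpos hT (by linarith) (by linarith)
      calc (t/2) ^ (1-σ) / (1-σ) * (T + t/2)⁻¹ = ((t/2) ^ (1-σ) * (T + t/2)⁻¹) / (1-σ) := by ring
        _ ≤ ((T + t) ^ (1-σ) * (2 * (T + t)⁻¹)) / (1-σ) := by
            apply div_le_div_of_nonneg_right ?_ h1σ.le
            exact mul_le_mul k1 k2 (by positivity) (by positivity)
        _ = (2 * ((T + t) ^ (-α) * (T + t) ^ (α - σ))) / (1-σ) := by rw [k3, k4]
        _ ≤ (2 * (T ^ (-α) * (T + t) ^ (α - σ))) / (1-σ) := by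
            apply div_le_div_of_nonneg_right ?_ h1σ.le
            have := mul_le_mul_of_nonneg_right k5 hTtσ.le
            linarith
        _ = 2 / (1-σ) * (T ^ (-α) * (T + t) ^ (α - σ)) := by ring
    rw [hsplit]
    have hfinal1 := (hA.trans (le_of_eq hAval)).trans hAbound
    have hfinal2 := (hB.trans (le_of_eq hBval)).trans hBbound
    have hextra : 0 ≤ 2 ^ (σ-α) / (1-σ) * (T ^ (-α) * (T + t) ^ (α - σ)) := by positivity
    nlinarith [mul_pos hTα hTtσ]
end

section
/- In the normal-form setting below, set f_j(t) = |μ_j(t)|², f = f_1 + … + f_K and h = Σ_{l=1}^{K} 2^{-l} f_l. Then at the point t: (i) d/dt (f_0 + f) ≤ 2(K+1) · max_{0≤l≤K} |conj(μ_l(t)) g_l(t)|; and (ii) d/dt (f_0 + h) ≥ −2(K+1) · max_{0≤l≤K} |conj(μ_l(t)) g_l(t)|. -/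
/-!
Differentiating `Σ_j w_j |μ_j|²` along the flow, the terms `c_l^j` drop out because they are
purely imaginary, and after swapping the roles of `j` and `a` in the second half of
`Re d_{ab}^j` the quintic terms add up to
`Σ_{j,a,b} (2 - δ_a^b) γ_{ab}^j f_a f_b f_j (w_j - 2 w_a)`.
For `w ≡ 1` every summand is `≤ 0`. For `w_j = 2^{-j}` every summand is `≥ 0`, since
`γ_{ab}^j ≠ 0` forces `j < a` and hence `w_j ≥ 2 w_a`. The forcing terms contribute at most
`(K + 1) max_l |conj(μ_l) g_l|` in absolute value because `0 < w_j ≤ 1`.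
-/

open Finset

variable {ι : Type*}

lemma quintic_summand_nonneg [DecidableEq ι] {γ : ι → ι → ι → ℝ} {F : ι → ℝ}
    (hγ : ∀ a b l, 0 ≤ γ a b l) (hF : ∀ j, 0 ≤ F j) (a b j : ι) :
    0 ≤ (2 - if a = b then (1 : ℝ) else 0) * γ a b j * (F a * F b * F j) :=
  mul_nonneg (mul_nonneg (by split_ifs <;> norm_num) (hγ a b j))
    (mul_nonneg (mul_nonneg (hF a) (hF b)) (hF j))

variable [Fintype ι]

lemma re_conj_mul_mul_self (z α : ℂ) : (starRingEnd ℂ z * (α * z)).re = α.re * ‖z‖ ^ 2 := by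
  rw [mul_left_comm, ← Complex.normSq_eq_conj_mul_self, Complex.normSq_eq_norm_sq,
    Complex.re_mul_ofReal]

lemma abs_sum_mul_re_le_card_mul_sup' [Nonempty ι] (w : ι → ℝ) (hw : ∀ j, |w j| ≤ 1)
    (x : ι → ℂ) :
    |∑ j, w j * (x j).re| ≤ Fintype.card ι * univ.sup' univ_nonempty fun j => ‖x j‖ := by
  calc |∑ j, w j * (x j).re| ≤ ∑ j, |w j * (x j).re| := abs_sum_le_sum_abs _ _
    _ ≤ ∑ _j : ι, univ.sup' univ_nonempty fun j => ‖x j‖ := by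
        refine sum_le_sum fun j _ => ?_
        rw [abs_mul]
        calc |w j| * |(x j).re| ≤ 1 * ‖x j‖ :=
              mul_le_mul (hw j) (Complex.abs_re_le_norm _) (abs_nonneg _) zero_le_one
          _ ≤ _ := by rw [one_mul]; exact le_sup' (fun j => ‖x j‖) (mem_univ j)
    _ = _ := by rw [sum_const, card_univ, nsmul_eq_mul]

lemma two_mul_inv_two_pow_le {m n : ℕ} (h : m < n) : 2 * ((2 : ℝ) ^ n)⁻¹ ≤ ((2 : ℝ) ^ m)⁻¹ := by
  have : (2 : ℝ) ^ (m + 1) ≤ 2 ^ n := pow_le_pow_right₀ one_le_two h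
  calc 2 * ((2 : ℝ) ^ n)⁻¹ ≤ 2 * ((2 : ℝ) ^ (m + 1))⁻¹ := by gcongr
    _ = ((2 : ℝ) ^ m)⁻¹ := by rw [pow_succ, mul_inv, mul_left_comm, mul_inv_cancel₀ two_ne_zero,
        mul_one]

/-- The real part of the quintic coefficient of `μ_j'`, with `F a` standing for `|μ_a|²`. -/
def quinticRate (d : ι → ι → ι → ℂ) (F : ι → ℝ) (j : ι) : ℝ :=
  ∑ a, ∑ b, (d a b j).re * F a * F b

section QuinticRate

variable [DecidableEq ι] (γ : ι → ι → ι → ℝ) (d : ι → ι → ι → ℂ) (F : ι → ℝ)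
  (hd : ∀ a b j, (d a b j).re =
    (2 - if a = b then (1 : ℝ) else 0) * γ a b j
      - 2 * (2 - if j = b then (1 : ℝ) else 0) * γ j b a)
include hd

lemma sum_mul_quinticRate_mul_eq (v : ι → ℝ) :
    ∑ j, v j * (quinticRate d F j * F j)
      = ∑ j, ∑ a, ∑ b, (2 - if a = b then (1 : ℝ) else 0) * γ a b j
          * (F a * F b * F j) * (v j - 2 * v a) := by
  calc ∑ j, v j * (quinticRate d F j * F j)
      = ∑ j, ∑ a, ∑ b, (2 - if a = b then (1 : ℝ) else 0) * γ a b j * (F a * F b * F j) * v j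
        - ∑ j, ∑ a, ∑ b,
          2 * (2 - if j = b then (1 : ℝ) else 0) * γ j b a * (F a * F b * F j) * v j := by
        simp only [quinticRate, hd, sum_mul, mul_sum, ← sum_sub_distrib]
        congr! 3 with j - a - b -
        ring
    _ = ∑ j, ∑ a, ∑ b, (2 - if a = b then (1 : ℝ) else 0) * γ a b j * (F a * F b * F j) * v j
        - ∑ j, ∑ a, ∑ b,
          2 * (2 - if a = b then (1 : ℝ) else 0) * γ a b j * (F j * F b * F a) * v a := by
        congr 1
        exact sum_comm
    _ = _ := by
        simp only [← sum_sub_distrib]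
        congr! 3 with j - a - b -
        ring

lemma sum_quinticRate_mul_nonpos (hγ : ∀ a b l, 0 ≤ γ a b l) (hF : ∀ j, 0 ≤ F j) :
    ∑ j, quinticRate d F j * F j ≤ 0 := by
  simpa using (sum_mul_quinticRate_mul_eq γ d F hd fun _ => 1).le.trans <|
    sum_nonpos fun j _ => sum_nonpos fun a _ => sum_nonpos fun b _ =>
      mul_nonpos_of_nonneg_of_nonpos (quintic_summand_nonneg hγ hF a b j) (by norm_num)

lemma sum_mul_quinticRate_mul_nonneg [LT ι] (hγ : ∀ a b l, 0 ≤ γ a b l)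
    (hγvanish : ∀ a b l, ¬(l < a ∧ l < b) → γ a b l = 0) (hF : ∀ j, 0 ≤ F j) (w : ι → ℝ)
    (hw : ∀ j a, j < a → 2 * w a ≤ w j) :
    0 ≤ ∑ j, w j * (quinticRate d F j * F j) := by
  rw [sum_mul_quinticRate_mul_eq γ d F hd w]
  refine sum_nonneg fun j _ => sum_nonneg fun a _ => sum_nonneg fun b _ => ?_
  by_cases hja : j < a ∧ j < b
  · exact mul_nonneg (quintic_summand_nonneg hγ hF a b j) (sub_nonneg.2 (hw j a hja.1))
  · simp [hγvanish a b j hja]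

end QuinticRate

section NormalForm

variable (c : ι → ι → ℂ) (hc : ∀ l j, (c l j).re = 0) (d : ι → ι → ι → ℂ)
  (t : ℝ) (μ : ι → ℝ → ℂ) (g : ι → ℂ)
  (hμ : ∀ j, HasDerivAt (μ j)
    ((∑ l, c l j * (‖μ l t‖ : ℂ) ^ 2) * μ j t
      + (∑ a, ∑ b, d a b j * (‖μ a t‖ : ℂ) ^ 2 * (‖μ b t‖ : ℂ) ^ 2) * μ j t + g j) t)
include hc hμ

lemma hasDerivAt_norm_sq_of_normalForm (j : ι) :
    HasDerivAt (fun s => ‖μ j s‖ ^ 2)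
      (2 * (quinticRate d (fun l => ‖μ l t‖ ^ 2) j * ‖μ j t‖ ^ 2
        + (starRingEnd ℂ (μ j t) * g j).re)) t := by
  convert (hμ j).norm_sq using 2
  rw [Complex.inner, mul_comm _ (starRingEnd ℂ _), mul_add, mul_add, Complex.add_re,
    Complex.add_re, re_conj_mul_mul_self, re_conj_mul_mul_self]
  simp only [quinticRate, Complex.re_sum, ← Complex.ofReal_pow, Complex.re_mul_ofReal, hc,
    zero_mul, sum_const_zero, zero_add]

lemma hasDerivAt_sum_mul_norm_sq_of_normalForm (w : ι → ℝ) :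
    HasDerivAt (fun s => ∑ j, w j * ‖μ j s‖ ^ 2)
      (2 * ∑ j, w j * (quinticRate d (fun l => ‖μ l t‖ ^ 2) j * ‖μ j t‖ ^ 2)
        + 2 * ∑ j, w j * (starRingEnd ℂ (μ j t) * g j).re) t := by
  refine (HasDerivAt.fun_sum fun j (_ : j ∈ univ) =>
    (hasDerivAt_norm_sq_of_normalForm c hc d t μ g hμ j).const_mul (w j)).congr_deriv ?_
  simp only [mul_sum, ← sum_add_distrib]
  congr! 1 with j -
  ring

end NormalForm

theorem stmt17_general (K : ℕ)
    (γ : Fin (K + 1) → Fin (K + 1) → Fin (K + 1) → ℝ)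
    (hγnonneg : ∀ a b l, 0 ≤ γ a b l)
    (hγvanish : ∀ a b l : Fin (K + 1), ¬(l < a ∧ l < b) → γ a b l = 0)
    (c : Fin (K + 1) → Fin (K + 1) → ℂ) (hc : ∀ l j, (c l j).re = 0)
    (d : Fin (K + 1) → Fin (K + 1) → Fin (K + 1) → ℂ)
    (hd : ∀ a b j, (d a b j).re =
      (2 - if a = b then (1 : ℝ) else 0) * γ a b j
        - 2 * (2 - if j = b then (1 : ℝ) else 0) * γ j b a)
    (t : ℝ) (μ : Fin (K + 1) → ℝ → ℂ) (g : Fin (K + 1) → ℂ)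
    (hμ : ∀ j, HasDerivAt (μ j)
      ((∑ l, c l j * (‖μ l t‖ : ℂ) ^ 2) * μ j t
        + (∑ a, ∑ b, d a b j * (‖μ a t‖ : ℂ) ^ 2 * (‖μ b t‖ : ℂ) ^ 2) * μ j t + g j) t) :
    deriv (fun s => ‖μ 0 s‖ ^ 2 + ∑ l : Fin K, ‖μ l.succ s‖ ^ 2) t
      ≤ 2 * ((K : ℝ) + 1) *
          (Finset.univ.sup' Finset.univ_nonempty
            fun l : Fin (K + 1) => ‖(starRingEnd ℂ) (μ l t) * g l‖) ∧
    -(2 * ((K : ℝ) + 1) *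
          (Finset.univ.sup' Finset.univ_nonempty
            fun l : Fin (K + 1) => ‖(starRingEnd ℂ) (μ l t) * g l‖))
      ≤ deriv (fun s => ‖μ 0 s‖ ^ 2
          + ∑ l : Fin K, ((2 : ℝ) ^ (l.val + 1))⁻¹ * ‖μ l.succ s‖ ^ 2) t := by
  have hF : ∀ j, 0 ≤ ‖μ j t‖ ^ 2 := fun j => sq_nonneg _
  have hderiv := hasDerivAt_sum_mul_norm_sq_of_normalForm c hc d t μ g hμ
  have hforcing := abs_sum_mul_re_le_card_mul_sup' (ι := Fin (K + 1))
    (x := fun l => starRingEnd ℂ (μ l t) * g l)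
  simp only [Fintype.card_fin, Nat.cast_add, Nat.cast_one] at hforcing
  constructor
  · have hsum : (fun s => ‖μ 0 s‖ ^ 2 + ∑ l : Fin K, ‖μ l.succ s‖ ^ 2)
        = fun s => ∑ j, (1 : ℝ) * ‖μ j s‖ ^ 2 := by
      simp [Fin.sum_univ_succ]
    rw [hsum, (hderiv fun _ => 1).deriv]
    have hforce := (abs_le.1 (hforcing (fun _ => 1) fun _ => by simp)).2
    have hquintic := sum_quinticRate_mul_nonpos γ d _ hd hγnonneg hF
    simp only [one_mul] at hforce ⊢
    linarith
  · have hsum : (fun s => ‖μ 0 s‖ ^ 2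
          + ∑ l : Fin K, ((2 : ℝ) ^ (l.val + 1))⁻¹ * ‖μ l.succ s‖ ^ 2)
        = fun s => ∑ j : Fin (K + 1), ((2 : ℝ) ^ (j : ℕ))⁻¹ * ‖μ j s‖ ^ 2 := by
      simp [Fin.sum_univ_succ]
    rw [hsum, (hderiv _).deriv]
    have hforce := (abs_le.1 (hforcing (fun j => ((2 : ℝ) ^ (j : ℕ))⁻¹) fun j => by
      rw [abs_inv, abs_pow, abs_two]; exact inv_le_one_of_one_le₀ (one_le_pow₀ one_le_two))).1
    have hquintic := sum_mul_quinticRate_mul_nonneg γ d _ hd hγnonneg hγvanish hF _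
      fun j a hja => two_mul_inv_two_pow_le hja
    linarith

/-- Monotonicity inequalities (6.12): in the normal-form setting, with
`f_j = |μ_j|²`, `f = f_1 + … + f_K` and `h = Σ_{l=1}^K 2^{-l} f_l`:
(i) `(f_0 + f)' ≤ 2(K+1) max_l |conj(μ_l) g_l|`;
(ii) `(f_0 + h)' ≥ −2(K+1) max_l |conj(μ_l) g_l|`. -/
theorem stmt17 (K : ℕ) (hK : 1 ≤ K)
    (γ : Fin (K + 1) → Fin (K + 1) → Fin (K + 1) → ℝ)
    (hγnonneg : ∀ a b l, 0 ≤ γ a b l)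
    (hγvanish : ∀ a b l : Fin (K + 1), ¬(l < a ∧ l < b) → γ a b l = 0)
    (c : Fin (K + 1) → Fin (K + 1) → ℂ) (hc : ∀ l j, (c l j).re = 0)
    (d : Fin (K + 1) → Fin (K + 1) → Fin (K + 1) → ℂ)
    (hd : ∀ a b j, (d a b j).re =
      (2 - if a = b then (1 : ℝ) else 0) * γ a b j
        - 2 * (2 - if j = b then (1 : ℝ) else 0) * γ j b a)
    (t : ℝ) (μ : Fin (K + 1) → ℝ → ℂ) (g : Fin (K + 1) → ℂ)
    (hμ : ∀ j, HasDerivAt (μ j)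
      ((∑ l, c l j * (‖μ l t‖ : ℂ) ^ 2) * μ j t
        + (∑ a, ∑ b, d a b j * (‖μ a t‖ : ℂ) ^ 2 * (‖μ b t‖ : ℂ) ^ 2) * μ j t + g j) t) :
    deriv (fun s => ‖μ 0 s‖ ^ 2 + ∑ l : Fin K, ‖μ l.succ s‖ ^ 2) t
      ≤ 2 * ((K : ℝ) + 1) *
          (Finset.univ.sup' Finset.univ_nonempty
            fun l : Fin (K + 1) => ‖(starRingEnd ℂ) (μ l t) * g l‖) ∧
    -(2 * ((K : ℝ) + 1) *
          (Finset.univ.sup' Finset.univ_nonempty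
            fun l : Fin (K + 1) => ‖(starRingEnd ℂ) (μ l t) * g l‖))
      ≤ deriv (fun s => ‖μ 0 s‖ ^ 2
          + ∑ l : Fin K, ((2 : ℝ) ^ (l.val + 1))⁻¹ * ‖μ l.succ s‖ ^ 2) t :=
  stmt17_general K γ hγnonneg hγvanish c hc d hd t μ g hμ
end

section
/- Let n > 0, γ₀ > 0 and T₀ > 0, and define ρ(t) = n^{-1}(T₀ + γ₀ t)^{-1/2} for t ≥ 0. Let 0 ≤ t₁ ≤ T and let f : [t₁, T] → ℝ be differentiable with f(t₁) ≤ (7/5)ρ(t₁). Suppose that for every t ∈ [t₁, T], f'(t) ≤ −(γ₀ n²/2) f(t)³ + ε n² ρ(t)³, where ε is a constant with 0 ≤ ε ≤ γ₀/2. Then f(t) ≤ (7/5)ρ(t) for all t ∈ [t₁, T]. -/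
/-!
`ρ(t) = n⁻¹ (T₀ + γ₀ t)^(-1/2)` solves `ρ' = -(γ₀ n² / 2) ρ³`, so `g = (7/5) ρ` satisfies
`g' = -(γ₀ n² / 2) (7/5) ρ³`. Where `f` touches `g`, the differential inequality gives
`f' ≤ (-(γ₀ / 2) (7/5)³ + ε) n² ρ³`, which is strictly below `g'` because
`(7/5)³ - 7/5 = 168/125 > 1` and `ε ≤ γ₀ / 2`; the comparison principle then keeps `f ≤ g`.
-/

open Set

theorem le_of_hasDerivAt_lt_of_eq {f f' g g' : ℝ → ℝ} {a b : ℝ}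
    (hf : ∀ t ∈ Icc a b, HasDerivAt f (f' t) t) (hg : ∀ t ∈ Icc a b, HasDerivAt g (g' t) t)
    (ha : f a ≤ g a) (hcontact : ∀ t ∈ Ico a b, f t = g t → f' t < g' t) :
    ∀ t ∈ Icc a b, f t ≤ g t :=
  fun _ ht => image_le_of_deriv_right_lt_deriv_boundary'
    (fun s hs => (hf s hs).continuousAt.continuousWithinAt)
    (fun s hs => (hf s (Ico_subset_Icc_self hs)).hasDerivWithinAt) ha
    (fun s hs => (hg s hs).continuousAt.continuousWithinAt)
    (fun s hs => (hg s (Ico_subset_Icc_self hs)).hasDerivWithinAt) hcontact ht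

noncomputable def decayProfile (n γ₀ T₀ t : ℝ) : ℝ :=
  n⁻¹ * (T₀ + γ₀ * t) ^ (-(1 : ℝ) / 2)

theorem decayProfile_pos {n γ₀ T₀ t : ℝ} (hn : 0 < n) (hw : 0 < T₀ + γ₀ * t) :
    0 < decayProfile n γ₀ T₀ t := by
  unfold decayProfile
  positivity

theorem hasDerivAt_decayProfile {n γ₀ T₀ t : ℝ} (hn : n ≠ 0) (hw : 0 < T₀ + γ₀ * t) :
    HasDerivAt (decayProfile n γ₀ T₀)
      (-(γ₀ * n ^ 2 / 2) * decayProfile n γ₀ T₀ t ^ 3) t := by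
  have hlin : HasDerivAt (fun s : ℝ => T₀ + γ₀ * s) γ₀ t := by
    simpa using ((hasDerivAt_id t).const_mul γ₀).const_add T₀
  refine ((hlin.rpow_const (p := -(1 : ℝ) / 2) (Or.inl hw.ne')).const_mul n⁻¹).congr_deriv ?_
  have hcube : ((T₀ + γ₀ * t) ^ (-(1 : ℝ) / 2)) ^ 3 = (T₀ + γ₀ * t) ^ (-(1 : ℝ) / 2 - 1) := by
    rw [← Real.rpow_natCast, ← Real.rpow_mul hw.le]
    norm_num
  rw [decayProfile, mul_pow, hcube]
  field_simp

theorem stmt18_general (n γ₀ T₀ : ℝ) (hn : 0 < n) (hγ : 0 < γ₀) (hT₀ : 0 < T₀)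
    (t₁ T : ℝ) (ht₁ : 0 ≤ t₁)
    (f f' : ℝ → ℝ) (ε : ℝ) (hε : ε ≤ γ₀ / 2)
    (hf : ∀ t ∈ Icc t₁ T, HasDerivAt f (f' t) t)
    (hini : f t₁ ≤ 7 / 5 * (n⁻¹ * (T₀ + γ₀ * t₁) ^ (-(1 : ℝ) / 2)))
    (hf' : ∀ t ∈ Icc t₁ T,
      f' t ≤ -(γ₀ * n ^ 2 / 2) * f t ^ 3
        + ε * n ^ 2 * (n⁻¹ * (T₀ + γ₀ * t) ^ (-(1 : ℝ) / 2)) ^ 3) :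
    ∀ t ∈ Icc t₁ T, f t ≤ 7 / 5 * (n⁻¹ * (T₀ + γ₀ * t) ^ (-(1 : ℝ) / 2)) := by
  set ρ := decayProfile n γ₀ T₀
  have hw : ∀ t ∈ Icc t₁ T, 0 < T₀ + γ₀ * t := fun t ht => by
    nlinarith [ht₁.trans ht.1]
  refine le_of_hasDerivAt_lt_of_eq (g := fun t => 7 / 5 * ρ t) hf
    (fun t ht => (hasDerivAt_decayProfile hn.ne' (hw t ht)).const_mul (7 / 5)) hini ?_
  intro t ht hcontact
  have hρ : 0 < ρ t ^ 3 * n ^ 2 := by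
    have := decayProfile_pos hn (hw t (Ico_subset_Icc_self ht))
    positivity
  have hf't : f' t ≤ -(γ₀ * n ^ 2 / 2) * (7 / 5 * ρ t) ^ 3 + ε * n ^ 2 * ρ t ^ 3 := by
    rw [← hcontact]
    exact hf' t (Ico_subset_Icc_self ht)
  nlinarith

/-- Comparison argument for the decay of the higher bound states (Lemma 4.5):
with `ρ(t) = n^{-1}(T₀ + γ₀ t)^{-1/2}`, if `f(t₁) ≤ (7/5)ρ(t₁)` and
`f' ≤ −(γ₀ n²/2) f³ + ε n² ρ³` on `[t₁,T]` with `0 ≤ ε ≤ γ₀/2`, then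
`f ≤ (7/5)ρ` on `[t₁,T]`. -/
theorem stmt18 (n γ₀ T₀ : ℝ) (hn : 0 < n) (hγ : 0 < γ₀) (hT₀ : 0 < T₀)
    (t₁ T : ℝ) (ht₁ : 0 ≤ t₁) (htT : t₁ ≤ T)
    (f f' : ℝ → ℝ) (ε : ℝ) (hε0 : 0 ≤ ε) (hε : ε ≤ γ₀ / 2)
    (hf : ∀ t ∈ Icc t₁ T, HasDerivAt f (f' t) t)
    (hini : f t₁ ≤ 7 / 5 * (n⁻¹ * (T₀ + γ₀ * t₁) ^ (-(1 : ℝ) / 2)))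
    (hf' : ∀ t ∈ Icc t₁ T,
      f' t ≤ -(γ₀ * n ^ 2 / 2) * f t ^ 3
        + ε * n ^ 2 * (n⁻¹ * (T₀ + γ₀ * t) ^ (-(1 : ℝ) / 2)) ^ 3) :
    ∀ t ∈ Icc t₁ T, f t ≤ 7 / 5 * (n⁻¹ * (T₀ + γ₀ * t) ^ (-(1 : ℝ) / 2)) :=
  stmt18_general n γ₀ T₀ hn hγ hT₀ t₁ T ht₁ f f' ε hε hf hini hf'
end

section
/- Let t₂ ≤ T, let c > 0, let f : [t₂, T] → (0,∞) be continuously differentiable, and let ψ : [t₂, T] → [0,∞) be continuous with ∫_{t₂}^{T} ψ(s) ds ≤ 1/(2 f(t₂)). Suppose that −f'(t)/f(t)² ≥ c − ψ(t) for all t ∈ [t₂, T]. Then for every t ∈ [t₂, T], f(t) ≤ [ 1/(2 f(t₂)) + c (t − t₂) ]^{-1}. -/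
open Set

/-- Riccati-type upper bound (inequality (6.43)): if `f > 0` is `C¹` on `[t₂,T]`,
`ψ ≥ 0` is continuous with `∫_{t₂}^T ψ ≤ 1/(2 f(t₂))`, and
`−f'/f² ≥ c − ψ` on `[t₂,T]` with `c > 0`, then
`f(t) ≤ [1/(2 f(t₂)) + c(t − t₂)]⁻¹` on `[t₂,T]`. -/
theorem stmt19 (t₂ T c : ℝ) (htT : t₂ ≤ T) (hc : 0 < c)
    (f f' ψ : ℝ → ℝ)
    (hfpos : ∀ t ∈ Icc t₂ T, 0 < f t)
    (hf : ∀ t ∈ Icc t₂ T, HasDerivAt f (f' t) t)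
    (hf'cont : ContinuousOn f' (Icc t₂ T))
    (hψcont : ContinuousOn ψ (Icc t₂ T))
    (hψ0 : ∀ t ∈ Icc t₂ T, 0 ≤ ψ t)
    (hψint : ∫ s in t₂..T, ψ s ≤ 1 / (2 * f t₂))
    (hineq : ∀ t ∈ Icc t₂ T, c - ψ t ≤ -f' t / f t ^ 2) :
    ∀ t ∈ Icc t₂ T, f t ≤ (1 / (2 * f t₂) + c * (t - t₂))⁻¹ := by
  have ht₂ : t₂ ∈ Icc t₂ T := ⟨le_refl _, htT⟩
  have hfcont : ContinuousOn f (Icc t₂ T) := fun x hx => (hf x hx).continuousAt.continuousWithinAt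
  set g' : ℝ → ℝ := fun s => -f' s / f s ^ 2 with hg'
  have hg'cont : ContinuousOn g' (Icc t₂ T) :=
    (hf'cont.neg).div (hfcont.pow 2) (fun x hx => pow_ne_zero _ (hfpos x hx).ne')
  intro t ht
  have hsub : Icc t₂ t ⊆ Icc t₂ T := Icc_subset_Icc le_rfl ht.2
  have huIcc : uIcc t₂ t = Icc t₂ t := uIcc_of_le ht.1
  have hderiv : ∀ x ∈ Icc t₂ t, HasDerivAt (fun s => (f s)⁻¹) (g' x) x := fun x hx =>
    (hf x (hsub hx)).inv (hfpos x (hsub hx)).ne'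
  have hint_g' : IntervalIntegrable g' MeasureTheory.volume t₂ t :=
    (hg'cont.mono hsub).intervalIntegrable_of_Icc ht.1
  have hftc : ∫ s in t₂..t, g' s = (f t)⁻¹ - (f t₂)⁻¹ := by
    apply intervalIntegral.integral_eq_sub_of_hasDerivAt
    · rw [huIcc]; exact hderiv
    · exact hint_g'
  have hint_ψ : IntervalIntegrable ψ MeasureTheory.volume t₂ t :=
    (hψcont.mono hsub).intervalIntegrable_of_Icc ht.1
  have hint_ψT : IntervalIntegrable ψ MeasureTheory.volume t T :=
    (hψcont.mono (Icc_subset_Icc ht.1 le_rfl)).intervalIntegrable_of_Icc ht.2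
  have hmono : ∫ s in t₂..t, (c - ψ s) ≤ ∫ s in t₂..t, g' s := by
    apply intervalIntegral.integral_mono_on ht.1 _ hint_g'
    · intro x hx; exact hineq x (hsub hx)
    · exact (intervalIntegrable_const).sub hint_ψ
  have hsplit : ∫ s in t₂..t, (c - ψ s) = c * (t - t₂) - ∫ s in t₂..t, ψ s := by
    rw [intervalIntegral.integral_sub intervalIntegrable_const hint_ψ,
      intervalIntegral.integral_const, smul_eq_mul, mul_comm]
  have hψle : ∫ s in t₂..t, ψ s ≤ ∫ s in t₂..T, ψ s := by
    rw [← intervalIntegral.integral_add_adjacent_intervals hint_ψ hint_ψT]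
    have : 0 ≤ ∫ s in t..T, ψ s :=
      intervalIntegral.integral_nonneg ht.2 (fun x hx =>
        hψ0 x ⟨le_trans ht.1 hx.1, hx.2⟩)
    linarith
  have hft₂ : 0 < f t₂ := hfpos t₂ ht₂
  have hkey : 1 / (2 * f t₂) + c * (t - t₂) ≤ (f t)⁻¹ := by
    have h1 : c * (t - t₂) - ∫ s in t₂..t, ψ s ≤ (f t)⁻¹ - (f t₂)⁻¹ := by
      rw [← hsplit, ← hftc]; exact hmono
    have h2 : (f t₂)⁻¹ = 1 / f t₂ := (one_div _).symm
    have h3 : 1 / (2 * f t₂) = 1 / f t₂ - 1 / (2 * f t₂) := by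
      field_simp; ring
    linarith
  have hpos : 0 < 1 / (2 * f t₂) + c * (t - t₂) := by
    have : 0 < 1 / (2 * f t₂) := by positivity
    nlinarith [sub_nonneg.mpr ht.1]
  calc f t = ((f t)⁻¹)⁻¹ := (inv_inv _).symm
    _ ≤ (1 / (2 * f t₂) + c * (t - t₂))⁻¹ :=
        inv_anti₀ hpos hkey
end
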